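/- arXiv:1511.01272 — 14 statements merged into one kernel-verified Lean document; each statement's English description precedes it below -/
import Mathlib

section
/- Let P be a PCS on a countable type I and let D ⊆ P be a nonempty set directed for the pointwise order. Then for each a ∈ I the set {u_a | u ∈ D} is bounded, and the pointwise supremum v defined by v_a = ⨆_{u∈D} u_a belongs to P (and is the least upper bound of D in P). -/
open scoped NNReal ENNReal

/-- The pairing `⟨u,u'⟩ = ∑' i, u i * u' i` in `[0,∞]`. -/
noncomputable def pairing {I : Type*} (u u' : I → ℝ≥0) : ℝ≥0∞ :=
  ∑' i, (u i : ℝ≥0∞) * (u' i : ℝ≥0∞)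

/-- The polar of a set of nonnegative vectors. -/
def polar {I : Type*} (X : Set (I → ℝ≥0)) : Set (I → ℝ≥0) :=
  {u' | ∀ u ∈ X, pairing u u' ≤ 1}

/-- A probabilistic coherence space structure on the set `P`. -/
def IsPCS {I : Type*} (P : Set (I → ℝ≥0)) : Prop :=
  polar (polar P) = P ∧
  (∀ a : I, ∃ u ∈ P, 0 < u a) ∧
  (∀ a : I, ∃ A : ℝ≥0, 0 < A ∧ ∀ u ∈ P, u a ≤ A)

theorem pcs_directed_lub {I : Type*} [Countable I] (P : Set (I → ℝ≥0)) (hP : IsPCS P)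
    (D : Set (I → ℝ≥0)) (hDP : D ⊆ P) (hne : D.Nonempty)
    (hdir : DirectedOn (· ≤ ·) D) :
    (∀ a : I, BddAbove ((fun u => u a) '' D)) ∧
    (fun a => ⨆ u : D, (u : I → ℝ≥0) a) ∈ P ∧
    IsLUB D (fun a => ⨆ u : D, (u : I → ℝ≥0) a) := by
  haveI : Nonempty ↥D := hne.to_subtype
  have hbdd : ∀ a : I, BddAbove (Set.range fun u : ↥D => (u : I → ℝ≥0) a) := by
    intro a
    obtain ⟨A, -, hA⟩ := hP.2.2 a
    exact ⟨A, by rintro x ⟨u, rfl⟩; exact hA u (hDP u.2)⟩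
  have hbdd' : ∀ a : I, BddAbove ((fun u => u a) '' D) := by
    intro a
    obtain ⟨A, -, hA⟩ := hP.2.2 a
    exact ⟨A, by rintro x ⟨u, hu, rfl⟩; exact hA u (hDP hu)⟩
  refine ⟨hbdd', ?_, ?_, ?_⟩
  · rw [← hP.1]
    intro u' hu'
    have hcoe : ∀ i, ((⨆ u : ↥D, (u : I → ℝ≥0) i : ℝ≥0) : ℝ≥0∞) * (u' i : ℝ≥0∞)
        = ⨆ u : ↥D, ((u : I → ℝ≥0) i : ℝ≥0∞) * (u' i : ℝ≥0∞) := by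
      intro i
      rw [ENNReal.coe_iSup (hbdd i), ENNReal.iSup_mul]
    calc pairing u' (fun a => ⨆ u : ↥D, (u : I → ℝ≥0) a)
        = ∑' i, ⨆ u : ↥D, ((u : I → ℝ≥0) i : ℝ≥0∞) * (u' i : ℝ≥0∞) := by
          refine tsum_congr fun i => ?_
          rw [mul_comm]; exact hcoe i
      _ = ⨆ s : Finset I, ∑ i ∈ s, ⨆ u : ↥D, ((u : I → ℝ≥0) i : ℝ≥0∞) * (u' i : ℝ≥0∞) :=
          ENNReal.tsum_eq_iSup_sum
      _ ≤ 1 := by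
          refine iSup_le fun s => ?_
          rw [ENNReal.finsetSum_iSup]
          · refine iSup_le fun u => ?_
            refine le_trans ?_ (hu' u (hDP u.2))
            exact ENNReal.sum_le_tsum s
          · intro u₁ u₂
            obtain ⟨w, hwD, hw1, hw2⟩ := hdir u₁ u₁.2 u₂ u₂.2
            refine ⟨⟨w, hwD⟩, fun a => ⟨?_, ?_⟩⟩ <;>
              exact mul_le_mul_left (ENNReal.coe_le_coe.2 (by first | exact hw1 a | exact hw2 a)) _
  · intro u hu a
    exact le_ciSup (hbdd a) ⟨u, hu⟩
  · intro w hw a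
    exact ciSup_le fun u => hw u.2 a
end

section
/- Let P be a PCS on a countable type I. Let (u(i))_{i∈ℕ} be a family of elements of P and (α_i)_{i∈ℕ} a family in ℝ≥0 with ∑_{i∈ℕ} α_i ≤ 1. Then for each a ∈ I the series ∑_{i∈ℕ} α_i · u(i)_a converges in ℝ≥0, and the function a ↦ ∑_{i∈ℕ} α_i · u(i)_a belongs to P. -/
open scoped NNReal ENNReal

theorem pcs_subconvex_series {I : Type*} [Countable I] (P : Set (I → ℝ≥0)) (hP : IsPCS P)
    (u : ℕ → I → ℝ≥0) (hu : ∀ i, u i ∈ P)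
    (α : ℕ → ℝ≥0) (hα : ∑' i, (α i : ℝ≥0∞) ≤ 1) :
    (∀ a : I, Summable fun i => α i * u i a) ∧
    (fun a => ∑' i, α i * u i a) ∈ P := by
  have hsum : ∀ a : I, Summable fun i => α i * u i a := by
    intro a
    obtain ⟨A, hA0, hA⟩ := hP.2.2 a
    rw [← ENNReal.tsum_coe_ne_top_iff_summable]
    have hle : (∑' i, ((α i * u i a : ℝ≥0) : ℝ≥0∞)) ≤ ∑' i, (α i : ℝ≥0∞) * A := by
      apply ENNReal.tsum_le_tsum
      intro i
      push_cast
      exact mul_le_mul_right (ENNReal.coe_le_coe.mpr (hA _ (hu i))) _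
    rw [ENNReal.tsum_mul_right] at hle
    intro htop
    rw [htop] at hle
    exact (lt_irrefl (⊤ : ℝ≥0∞)) (lt_of_le_of_lt hle
      (ENNReal.mul_lt_top (lt_of_le_of_lt hα ENNReal.one_lt_top) ENNReal.coe_lt_top))
  refine ⟨hsum, ?_⟩
  rw [← hP.1]
  intro u' hu'
  have key : pairing u' (fun a => ∑' i, α i * u i a)
      = ∑' i, (α i : ℝ≥0∞) * pairing (u i) u' := by
    unfold pairing
    have h1 : ∀ a : I, (u' a : ℝ≥0∞) * ((∑' i, α i * u i a : ℝ≥0) : ℝ≥0∞)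
        = ∑' i, (α i : ℝ≥0∞) * ((u i a : ℝ≥0∞) * (u' a : ℝ≥0∞)) := by
      intro a
      rw [ENNReal.coe_tsum (hsum a), ← ENNReal.tsum_mul_left]
      congr 1
      ext i
      push_cast
      ring
    simp_rw [h1]
    rw [ENNReal.tsum_comm]
    congr 1
    ext i
    rw [ENNReal.tsum_mul_left]
  rw [key]
  calc ∑' i, (α i : ℝ≥0∞) * pairing (u i) u'
      ≤ ∑' i, (α i : ℝ≥0∞) * 1 :=
        ENNReal.tsum_le_tsum fun i => mul_le_mul_right (hu' _ (hu i)) _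
    _ = ∑' i, (α i : ℝ≥0∞) := by simp
    _ ≤ 1 := hα
end

section
/- Let P be a PCS on a countable type I and let u ∈ P. Let R(u) be the set of all w ∈ (I → ℝ≥0) such that w has finite support, every value w_a is rational, and for all a ∈ I, w_a > 0 implies w_a < u_a. Then R(u) ⊆ P, R(u) is directed for the pointwise order, and its pointwise supremum is u. (Hence P is an ω-continuous domain.) -/
open scoped NNReal ENNReal

/-! A polar is always a lower set, because the pairing is monotone; since `P = P^⊥⊥`, every
`w ≤ u ∈ P` lies in `P`, and in particular so does every approximant of `u`. Directedness holds
because the pointwise maximum of two approximants takes, at each index, the value of one of them.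
For the supremum, if an upper bound `v` of the approximants had `v a < u a`, a rational `q` strictly
between them would give the approximant `q • δ_a`, which is not below `v`. -/

open Function

theorem pairing_mono_right {I : Type*} (y : I → ℝ≥0) {w v : I → ℝ≥0} (h : w ≤ v) :
    pairing y w ≤ pairing y v :=
  ENNReal.tsum_le_tsum fun i => by gcongr; exact h i

theorem isLowerSet_polar {I : Type*} (X : Set (I → ℝ≥0)) : IsLowerSet (polar X) :=
  fun _ _ hwv hv y hy => (pairing_mono_right y hwv).trans (hv y hy)

theorem IsPCS.isLowerSet {I : Type*} {P : Set (I → ℝ≥0)} (hP : IsPCS P) : IsLowerSet P :=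
  hP.1 ▸ isLowerSet_polar _

def ratApproximants {I : Type*} (u : I → ℝ≥0) : Set (I → ℝ≥0) :=
  {w | (support w).Finite ∧ (∀ a, ∃ q : ℚ, (w a : ℝ) = (q : ℝ)) ∧ ∀ a, 0 < w a → w a < u a}

section ratApproximants

variable {I : Type*} {u w w₁ w₂ : I → ℝ≥0}

theorem le_of_mem_ratApproximants (hw : w ∈ ratApproximants u) : w ≤ u := fun a =>
  (eq_zero_or_pos (w a)).elim (fun h => h ▸ zero_le) fun h => (hw.2.2 a h).le

theorem mem_ratApproximants_of_forall_eq_or_eq (hw : ∀ a, w a = w₁ a ∨ w a = w₂ a)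
    (h₁ : w₁ ∈ ratApproximants u) (h₂ : w₂ ∈ ratApproximants u) : w ∈ ratApproximants u := by
  refine ⟨(h₁.1.union h₂.1).subset fun a ha => ?_, fun a => ?_, fun a => ?_⟩
  · rcases hw a with h | h
    · exact Or.inl (by rwa [mem_support, ← h])
    · exact Or.inr (by rwa [mem_support, ← h])
  · rcases hw a with h | h
    · rw [h]; exact h₁.2.1 a
    · rw [h]; exact h₂.2.1 a
  · rcases hw a with h | h
    · rw [h]; exact h₁.2.2 a
    · rw [h]; exact h₂.2.2 a

theorem directedOn_ratApproximants (u : I → ℝ≥0) : DirectedOn (· ≤ ·) (ratApproximants u) :=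
  fun w₁ h₁ w₂ h₂ => ⟨w₁ ⊔ w₂,
    mem_ratApproximants_of_forall_eq_or_eq (fun a => max_choice (w₁ a) (w₂ a)) h₁ h₂,
    le_sup_left, le_sup_right⟩

theorem single_mem_ratApproximants [DecidableEq I] {a : I} {c : ℝ≥0}
    (hc : ∃ q : ℚ, (c : ℝ) = q) (hcu : c < u a) : Pi.single a c ∈ ratApproximants u := by
  refine ⟨(Set.finite_singleton a).subset Pi.support_single_subset, fun b => ?_, fun b hb => ?_⟩
  · rcases eq_or_ne b a with rfl | hba
    · simpa using hc
    · exact ⟨0, by simp [hba]⟩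
  · rcases eq_or_ne b a with rfl | hba
    · simpa using hcu
    · simp [hba] at hb

theorem isLUB_ratApproximants (u : I → ℝ≥0) : IsLUB (ratApproximants u) u := by
  classical
  refine ⟨fun w hw => le_of_mem_ratApproximants hw, fun v hv a => ?_⟩
  by_contra! hva
  obtain ⟨q, hq, hvq, hqu⟩ := (NNReal.lt_iff_exists_rat_btwn _ _).1 hva
  have hq_rat : ∃ r : ℚ, ((Real.toNNReal q : ℝ≥0) : ℝ) = r :=
    ⟨q, Real.coe_toNNReal _ (Rat.cast_nonneg.2 hq)⟩
  have := hv (single_mem_ratApproximants hq_rat hqu) a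
  simp only [Pi.single_eq_same] at this
  exact this.not_gt hvq

end ratApproximants

theorem pcs_omega_continuous_general {I : Type*} (P : Set (I → ℝ≥0)) (hP : IsPCS P)
    (u : I → ℝ≥0) (hu : u ∈ P) (R : Set (I → ℝ≥0))
    (hR : R = {w : I → ℝ≥0 | (Function.support w).Finite ∧ (∀ a, ∃ q : ℚ, (w a : ℝ) = (q : ℝ)) ∧
      ∀ a, 0 < w a → w a < u a}) :
    R ⊆ P ∧ DirectedOn (· ≤ ·) R ∧ IsLUB R u := by
  change R = ratApproximants u at hR
  subst hR
  exact ⟨fun _ hw => hP.isLowerSet (le_of_mem_ratApproximants hw) hu,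
    directedOn_ratApproximants u, isLUB_ratApproximants u⟩

theorem pcs_omega_continuous {I : Type*} [Countable I] (P : Set (I → ℝ≥0)) (hP : IsPCS P)
    (u : I → ℝ≥0) (hu : u ∈ P) (R : Set (I → ℝ≥0))
    (hR : R = {w : I → ℝ≥0 | (Function.support w).Finite ∧ (∀ a, ∃ q : ℚ, (w a : ℝ) = (q : ℝ)) ∧
      ∀ a, 0 < w a → w a < u a}) :
    R ⊆ P ∧ DirectedOn (· ≤ ·) R ∧ IsLUB R u :=
  pcs_omega_continuous_general P hP u hu R hR
end

section
/- Let X = (I, P) and Y = (J, Q) be PCSs and let t : I × J → ℝ≥0. Then t belongs to the polar of {u ⊗ v' | u ∈ P, v' ∈ Q^⊥} (where (u ⊗ v')_{(a,b)} = u_a · v'_b and the polar is taken in (ℝ≥0)^{I×J}) if and only if for every u ∈ P, every value (t·u)_b = ∑'_{a∈I} t_{(a,b)} · u_a is finite and the function b ↦ (t·u)_b belongs to Q. -/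
open scoped NNReal ENNReal

/-- Matrix application `(t·u)_b = ∑' a, t (a,b) * u a` in `[0,∞]`. -/
noncomputable def matApp {I J : Type*} (t : I × J → ℝ≥0) (u : I → ℝ≥0) (b : J) : ℝ≥0∞ :=
  ∑' a, (t (a, b) : ℝ≥0∞) * (u a : ℝ≥0∞)

/-- `t` maps `P` into `Q`: for every `u ∈ P` all values `(t·u)_b` are finite and the
resulting function belongs to `Q`. -/
def MapsInto {I J : Type*} (t : I × J → ℝ≥0) (P : Set (I → ℝ≥0)) (Q : Set (J → ℝ≥0)) : Prop :=
  ∀ u ∈ P, (∀ b, matApp t u b ≠ ⊤) ∧ (fun b => (matApp t u b).toNNReal) ∈ Q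

private lemma key_pairing {I J : Type*} (t : I × J → ℝ≥0) (u : I → ℝ≥0) (v' : J → ℝ≥0) :
    pairing (fun p => u p.1 * v' p.2) t = ∑' b, (v' b : ℝ≥0∞) * matApp t u b := by
  unfold pairing matApp
  rw [ENNReal.tsum_prod', ENNReal.tsum_comm]
  refine tsum_congr fun b => ?_
  rw [← ENNReal.tsum_mul_left]
  refine tsum_congr fun a => ?_
  push_cast
  ring
theorem linear_hom_charact {I J : Type*} [Countable I] [Countable J]
    (P : Set (I → ℝ≥0)) (Q : Set (J → ℝ≥0)) (hP : IsPCS P) (hQ : IsPCS Q)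
    (t : I × J → ℝ≥0) :
    t ∈ polar {w : I × J → ℝ≥0 | ∃ u ∈ P, ∃ v' ∈ polar Q, w = fun p => u p.1 * v' p.2} ↔
      MapsInto t P Q := by
  constructor
  · intro ht u hu
    classical
    have hfin : ∀ b, matApp t u b ≠ ⊤ := by
      intro b
      obtain ⟨A, hA, hAb⟩ := hQ.2.2 b
      set v' : J → ℝ≥0 := fun j => if j = b then A⁻¹ else 0 with hv'
      have hv'pol : v' ∈ polar Q := by
        intro v hvQ
        unfold pairing
        rw [tsum_eq_single b (by intro j hj; simp [hv', hj])]
        simp only [hv', if_pos rfl]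
        rw [ENNReal.coe_inv hA.ne']
        have hle : (v b : ℝ≥0∞) ≤ (A : ℝ≥0∞) := ENNReal.coe_le_coe.mpr (hAb v hvQ)
        calc (v b : ℝ≥0∞) * (A : ℝ≥0∞)⁻¹ ≤ (A : ℝ≥0∞) * (A : ℝ≥0∞)⁻¹ :=
              mul_le_mul_left hle _
          _ = 1 := ENNReal.mul_inv_cancel (by exact_mod_cast hA.ne') ENNReal.coe_ne_top
      have h1 : pairing (fun p => u p.1 * v' p.2) t ≤ 1 :=
        ht _ ⟨u, hu, v', hv'pol, rfl⟩
      rw [key_pairing] at h1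
      have h2 : (v' b : ℝ≥0∞) * matApp t u b ≤ 1 := le_trans (ENNReal.le_tsum b) h1
      simp only [hv', if_pos rfl] at h2
      rw [ENNReal.coe_inv hA.ne'] at h2
      have h3 : matApp t u b ≤ (A : ℝ≥0∞) := by
        have := mul_le_mul_right h2 (A : ℝ≥0∞)
        rwa [← mul_assoc, ENNReal.mul_inv_cancel (by exact_mod_cast hA.ne') ENNReal.coe_ne_top,
          one_mul, mul_one] at this
      exact ne_top_of_le_ne_top ENNReal.coe_ne_top h3
    refine ⟨hfin, ?_⟩
    rw [← hQ.1]
    intro v' hv'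
    have h1 : pairing (fun p => u p.1 * v' p.2) t ≤ 1 := ht _ ⟨u, hu, v', hv', rfl⟩
    rw [key_pairing] at h1
    unfold pairing
    calc ∑' b, (v' b : ℝ≥0∞) * ((matApp t u b).toNNReal : ℝ≥0∞)
        = ∑' b, (v' b : ℝ≥0∞) * matApp t u b := by
          refine tsum_congr fun b => ?_
          rw [ENNReal.coe_toNNReal (hfin b)]
      _ ≤ 1 := h1
  · intro h w hw
    obtain ⟨u, hu, v', hv', rfl⟩ := hw
    obtain ⟨hfin, hmem⟩ := h u hu
    rw [key_pairing]
    have : ∀ b, matApp t u b = ((matApp t u b).toNNReal : ℝ≥0∞) := fun b =>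
      (ENNReal.coe_toNNReal (hfin b)).symm
    calc ∑' b, (v' b : ℝ≥0∞) * matApp t u b
        = pairing (fun b => (matApp t u b).toNNReal) v' := by
          unfold pairing
          congr 1; ext b; rw [← this b]; ring
      _ ≤ 1 := hv' _ hmem
end

section
/- Let X = (I, P), Y = (J, Q), Z = (K, R) be PCSs. Suppose s : I × J → ℝ≥0 maps P into Q (i.e., for every u ∈ P, (s·u)_b is finite for all b and b ↦ (s·u)_b belongs to Q) and t : J × K → ℝ≥0 maps Q into R. Then the matrix product defined by (t∘s)_{(a,c)} = ∑'_{b∈J} s_{(a,b)} · t_{(b,c)} is finite for every (a,c) ∈ I × K, for every u ∈ P one has (t∘s)·u = t·(s·u) coordinatewise, and t∘s maps P into R. -/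
open scoped NNReal ENNReal

theorem matrix_composition {I J K : Type*} [Countable I] [Countable J] [Countable K]
    (P : Set (I → ℝ≥0)) (Q : Set (J → ℝ≥0)) (R : Set (K → ℝ≥0))
    (hP : IsPCS P) (hQ : IsPCS Q) (hR : IsPCS R)
    (s : I × J → ℝ≥0) (t : J × K → ℝ≥0)
    (hs : MapsInto s P Q) (ht : MapsInto t Q R) :
    (∀ (a : I) (c : K), (∑' b : J, (s (a, b) : ℝ≥0∞) * (t (b, c) : ℝ≥0∞)) ≠ ⊤) ∧
    (∀ u ∈ P, ∀ c : K,
      matApp (fun p => (∑' b : J, (s (p.1, b) : ℝ≥0∞) * (t (b, p.2) : ℝ≥0∞)).toNNReal) u c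
        = matApp t (fun b => (matApp s u b).toNNReal) c) ∧
    MapsInto (fun p => (∑' b : J, (s (p.1, b) : ℝ≥0∞) * (t (b, p.2) : ℝ≥0∞)).toNNReal) P R := by

  -- finiteness of the composite matrix
  have key : ∀ (a : I) (c : K), (∑' b : J, (s (a, b) : ℝ≥0∞) * (t (b, c) : ℝ≥0∞)) ≠ ⊤ := by
    intro a c
    obtain ⟨u, hu, hua⟩ := hP.2.1 a
    obtain ⟨hsfin, hsv⟩ := hs u hu
    set v : J → ℝ≥0 := fun b => (matApp s u b).toNNReal with hv
    obtain ⟨htfin, -⟩ := ht v hsv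
    have hvb : ∀ b, (v b : ℝ≥0∞) = matApp s u b := fun b =>
      ENNReal.coe_toNNReal (hsfin b)
    have hle : (∑' b : J, (s (a, b) : ℝ≥0∞) * (t (b, c) : ℝ≥0∞)) * (u a : ℝ≥0∞)
        ≤ matApp t v c := by
      rw [← ENNReal.tsum_mul_right]
      refine ENNReal.tsum_le_tsum fun b => ?_
      have h1 : (s (a, b) : ℝ≥0∞) * (u a : ℝ≥0∞) ≤ matApp s u b :=
        ENNReal.le_tsum a
      calc (s (a, b) : ℝ≥0∞) * (t (b, c) : ℝ≥0∞) * (u a : ℝ≥0∞)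
          = (t (b, c) : ℝ≥0∞) * ((s (a, b) : ℝ≥0∞) * (u a : ℝ≥0∞)) := by ring
        _ ≤ (t (b, c) : ℝ≥0∞) * matApp s u b := by
            exact mul_le_mul_right h1 _
        _ = (t (b, c) : ℝ≥0∞) * (v b : ℝ≥0∞) := by rw [hvb]
    intro htop
    have : matApp t v c = ⊤ := by
      refine top_le_iff.mp ?_
      refine le_trans ?_ hle
      rw [htop, ENNReal.top_mul (show (u a : ℝ≥0∞) ≠ 0 by exact_mod_cast hua.ne')]
    exact htfin c this
  refine ⟨key, ?_, ?_⟩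
  · intro u hu c
    obtain ⟨hsfin, hsv⟩ := hs u hu
    have hvb : ∀ b, ((matApp s u b).toNNReal : ℝ≥0∞) = matApp s u b := fun b =>
      ENNReal.coe_toNNReal (hsfin b)
    calc matApp (fun p => (∑' b : J, (s (p.1, b) : ℝ≥0∞) * (t (b, p.2) : ℝ≥0∞)).toNNReal) u c
        = ∑' a, (∑' b : J, (s (a, b) : ℝ≥0∞) * (t (b, c) : ℝ≥0∞)) * (u a : ℝ≥0∞) := by
          refine tsum_congr fun a => ?_
          rw [ENNReal.coe_toNNReal (key a c)]
      _ = ∑' a, ∑' b, (t (b, c) : ℝ≥0∞) * ((s (a, b) : ℝ≥0∞) * (u a : ℝ≥0∞)) := by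
          refine tsum_congr fun a => ?_
          rw [← ENNReal.tsum_mul_right]
          exact tsum_congr fun b => by ring
      _ = ∑' b, ∑' a, (t (b, c) : ℝ≥0∞) * ((s (a, b) : ℝ≥0∞) * (u a : ℝ≥0∞)) :=
          ENNReal.tsum_comm
      _ = ∑' b, (t (b, c) : ℝ≥0∞) * matApp s u b := by
          refine tsum_congr fun b => ?_
          rw [ENNReal.tsum_mul_left]; rfl
      _ = matApp t (fun b => (matApp s u b).toNNReal) c := by
          exact tsum_congr fun b => by rw [hvb]
  · intro u hu
    obtain ⟨hsfin, hsv⟩ := hs u hu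
    obtain ⟨htfin, htv⟩ := ht _ hsv
    have heq : ∀ c,
        matApp (fun p => (∑' b : J, (s (p.1, b) : ℝ≥0∞) * (t (b, p.2) : ℝ≥0∞)).toNNReal) u c
        = matApp t (fun b => (matApp s u b).toNNReal) c := by
      intro c
      obtain ⟨hsfin', hsv'⟩ := hs u hu
      have hvb : ∀ b, ((matApp s u b).toNNReal : ℝ≥0∞) = matApp s u b := fun b =>
        ENNReal.coe_toNNReal (hsfin' b)
      calc matApp (fun p => (∑' b : J, (s (p.1, b) : ℝ≥0∞) * (t (b, p.2) : ℝ≥0∞)).toNNReal) u c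
          = ∑' a, (∑' b : J, (s (a, b) : ℝ≥0∞) * (t (b, c) : ℝ≥0∞)) * (u a : ℝ≥0∞) := by
            refine tsum_congr fun a => ?_
            rw [ENNReal.coe_toNNReal (key a c)]
        _ = ∑' a, ∑' b, (t (b, c) : ℝ≥0∞) * ((s (a, b) : ℝ≥0∞) * (u a : ℝ≥0∞)) := by
            refine tsum_congr fun a => ?_
            rw [← ENNReal.tsum_mul_right]
            exact tsum_congr fun b => by ring
        _ = ∑' b, ∑' a, (t (b, c) : ℝ≥0∞) * ((s (a, b) : ℝ≥0∞) * (u a : ℝ≥0∞)) :=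
            ENNReal.tsum_comm
        _ = ∑' b, (t (b, c) : ℝ≥0∞) * matApp s u b := by
            refine tsum_congr fun b => ?_
            rw [ENNReal.tsum_mul_left]; rfl
        _ = matApp t (fun b => (matApp s u b).toNNReal) c := by
            exact tsum_congr fun b => by rw [hvb]
    constructor
    · intro c; rw [heq c]; exact htfin c
    · have : (fun c => (matApp (fun p => (∑' b : J, (s (p.1, b) : ℝ≥0∞) * (t (b, p.2) : ℝ≥0∞)).toNNReal) u c).toNNReal)
          = fun c => (matApp t (fun b => (matApp s u b).toNNReal) c).toNNReal := by
        funext c; rw [heq c]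
      rw [this]; exact htv
end

section
/- Let X₁ = (I₁, P₁), X₂ = (I₂, P₂) and Y = (J, Q) be PCSs, and let P(X₁⊗X₂) = {u₁ ⊗ u₂ | u₁ ∈ P₁, u₂ ∈ P₂}^⊥⊥ ⊆ (ℝ≥0)^{I₁×I₂}, where (u₁ ⊗ u₂)_{(a₁,a₂)} = (u₁)_{a₁} · (u₂)_{a₂}. Let t : (I₁ × I₂) × J → ℝ≥0. Then t maps P(X₁⊗X₂) into Q if and only if for all u₁ ∈ P₁ and u₂ ∈ P₂, the matrix application t·(u₁ ⊗ u₂) is finite in each coordinate and belongs to Q. -/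
open scoped NNReal ENNReal

lemma pairing_comm {I : Type*} (u u' : I → ℝ≥0) : pairing u u' = pairing u' u :=
  tsum_congr fun i => mul_comm _ _

lemma fubini' {I J : Type*} (t : I × J → ℝ≥0) (w : I → ℝ≥0) (q' : J → ℝ≥0) :
    ∑' b, matApp t w b * (q' b : ℝ≥0∞)
      = ∑' a, (w a : ℝ≥0∞) * ∑' b, (t (a, b) : ℝ≥0∞) * (q' b : ℝ≥0∞) := by
  simp only [matApp]
  calc ∑' b, (∑' a, (t (a, b) : ℝ≥0∞) * (w a : ℝ≥0∞)) * (q' b : ℝ≥0∞)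
      = ∑' b, ∑' a, (t (a, b) : ℝ≥0∞) * (w a : ℝ≥0∞) * (q' b : ℝ≥0∞) := by
        congr 1; funext b; rw [ENNReal.tsum_mul_right]
    _ = ∑' a, ∑' b, (t (a, b) : ℝ≥0∞) * (w a : ℝ≥0∞) * (q' b : ℝ≥0∞) :=
        ENNReal.tsum_comm
    _ = ∑' a, (w a : ℝ≥0∞) * ∑' b, (t (a, b) : ℝ≥0∞) * (q' b : ℝ≥0∞) := by
        congr 1; funext a
        rw [← ENNReal.tsum_mul_left]
        congr 1; funext b; ring

lemma pairing_toNNReal {J : Type*} (f : J → ℝ≥0∞) (hf : ∀ b, f b ≠ ⊤) (q' : J → ℝ≥0) :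
    pairing (fun b => (f b).toNNReal) q' = ∑' b, f b * (q' b : ℝ≥0∞) := by
  unfold pairing
  congr 1; funext b
  rw [ENNReal.coe_toNNReal (hf b)]

theorem tensor_morph_charact {I₁ I₂ J : Type*} [Countable I₁] [Countable I₂] [Countable J]
    (P₁ : Set (I₁ → ℝ≥0)) (P₂ : Set (I₂ → ℝ≥0)) (Q : Set (J → ℝ≥0))
    (h₁ : IsPCS P₁) (h₂ : IsPCS P₂) (hQ : IsPCS Q)
    (t : (I₁ × I₂) × J → ℝ≥0) :
    MapsInto t
        (polar (polar {w : I₁ × I₂ → ℝ≥0 |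
          ∃ u₁ ∈ P₁, ∃ u₂ ∈ P₂, w = fun p => u₁ p.1 * u₂ p.2})) Q ↔
      ∀ u₁ ∈ P₁, ∀ u₂ ∈ P₂,
        (∀ b, matApp t (fun p => u₁ p.1 * u₂ p.2) b ≠ ⊤) ∧
        (fun b => (matApp t (fun p => u₁ p.1 * u₂ p.2) b).toNNReal) ∈ Q := by
    classical
  constructor
  · intro h u₁ hu₁ u₂ hu₂
    exact h _ (fun s hs => (pairing_comm s _).trans_le (hs _ ⟨u₁, hu₁, u₂, hu₂, rfl⟩))
  · intro H w hw
    have key : ∀ q' ∈ polar Q, ∑' b, matApp t w b * (q' b : ℝ≥0∞) ≤ 1 := by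
      intro q' hq'
      set g : I₁ × I₂ → ℝ≥0∞ := fun a => ∑' b, (t (a, b) : ℝ≥0∞) * (q' b : ℝ≥0∞) with hg
      have tens : ∀ u₁ ∈ P₁, ∀ u₂ ∈ P₂,
          ∑' b, matApp t (fun p => u₁ p.1 * u₂ p.2) b * (q' b : ℝ≥0∞) ≤ 1 := by
        intro u₁ hu₁ u₂ hu₂
        obtain ⟨hfin, hmem⟩ := H u₁ hu₁ u₂ hu₂
        have h' := hq' _ hmem
        rwa [pairing_toNNReal _ hfin] at h'
      have gfin : ∀ a, g a ≠ ⊤ := by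
        intro a
        obtain ⟨u₁, hu₁, hpos₁⟩ := h₁.2.1 a.1
        obtain ⟨u₂, hu₂, hpos₂⟩ := h₂.2.1 a.2
        have hle := tens u₁ hu₁ u₂ hu₂
        rw [fubini'] at hle
        have hle2 : ((u₁ a.1 * u₂ a.2 : ℝ≥0) : ℝ≥0∞) * g a ≤ 1 :=
          le_trans (ENNReal.le_tsum a) hle
        have hne : ((u₁ a.1 * u₂ a.2 : ℝ≥0) : ℝ≥0∞) ≠ 0 :=
          ENNReal.coe_ne_zero.mpr (mul_pos hpos₁ hpos₂).ne'
        intro htop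
        rw [htop, ENNReal.mul_top hne] at hle2
        simp at hle2
      have hs : (fun a => (g a).toNNReal) ∈
          polar {w : I₁ × I₂ → ℝ≥0 |
            ∃ u₁ ∈ P₁, ∃ u₂ ∈ P₂, w = fun p => u₁ p.1 * u₂ p.2} := by
        rintro u ⟨u₁, hu₁, u₂, hu₂, rfl⟩
        have heq : pairing (fun p => u₁ p.1 * u₂ p.2) (fun a => (g a).toNNReal)
            = ∑' a, ((fun p : I₁ × I₂ => u₁ p.1 * u₂ p.2) a : ℝ≥0∞) * g a := by
          unfold pairing; congr 1; funext a; rw [ENNReal.coe_toNNReal (gfin a)]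
        rw [heq, ← fubini']
        exact tens u₁ hu₁ u₂ hu₂
      have hw' := hw _ hs
      rw [fubini']
      calc ∑' a, (w a : ℝ≥0∞) * g a
          = pairing (fun a => (g a).toNNReal) w := by
            unfold pairing; congr 1; funext a
            rw [ENNReal.coe_toNNReal (gfin a), mul_comm]
        _ ≤ 1 := hw'
    have fin : ∀ b, matApp t w b ≠ ⊤ := by
      intro b
      obtain ⟨A, hA, hAQ⟩ := hQ.2.2 b
      set q' : J → ℝ≥0 := fun b' => if b' = b then A⁻¹ else 0 with hq'def
      have hq' : q' ∈ polar Q := by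
        intro u hu
        have heq : pairing u q' = (u b : ℝ≥0∞) * ((A⁻¹ : ℝ≥0) : ℝ≥0∞) := by
          unfold pairing
          rw [tsum_eq_single b]
          · simp [q']
          · intro b' hb'; simp [q', hb']
        rw [heq]
        calc (u b : ℝ≥0∞) * ((A⁻¹ : ℝ≥0) : ℝ≥0∞)
            ≤ (A : ℝ≥0∞) * ((A⁻¹ : ℝ≥0) : ℝ≥0∞) :=
              mul_le_mul_left (ENNReal.coe_le_coe.mpr (hAQ u hu)) _
          _ = 1 := by
              rw [← ENNReal.coe_mul, mul_inv_cancel₀ hA.ne', ENNReal.coe_one]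
      have hk := key q' hq'
      have h1 : matApp t w b * ((A⁻¹ : ℝ≥0) : ℝ≥0∞) ≤ 1 := by
        refine le_trans (le_of_eq ?_) (le_trans (ENNReal.le_tsum b) hk)
        simp [q']
      intro htop
      rw [htop, ENNReal.top_mul (by simp [hA.ne'])] at h1
      simp at h1
    refine ⟨fin, ?_⟩
    rw [← hQ.1]
    intro q' hq'
    rw [pairing_comm, pairing_toNNReal _ fin]
    exact key q' hq'
end

section
/- Let X = (I, P) and Y = (J, Q) be PCSs. Define P(X⊸Y) ⊆ (ℝ≥0)^{I×J} as the polar of {u ⊗ v' | u ∈ P, v' ∈ Q^⊥}, where (u ⊗ v')_{(a,b)} = u_a · v'_b. Then X⊸Y = (I × J, P(X⊸Y)) is a PCS: P(X⊸Y)^⊥⊥ = P(X⊸Y); for every (a,b) ∈ I × J there exists t ∈ P(X⊸Y) with t_{(a,b)} > 0; and for every (a,b) there exists A > 0 with t_{(a,b)} ≤ A for all t ∈ P(X⊸Y). -/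
open scoped NNReal ENNReal

lemma subset_polar_polar {I : Type*} (X : Set (I → ℝ≥0)) : X ⊆ polar (polar X) := by
  intro u hu u' hu'
  rw [pairing_comm]
  exact hu' u hu

lemma polar_antitone {I : Type*} {X Y : Set (I → ℝ≥0)} (h : X ⊆ Y) : polar Y ⊆ polar X :=
  fun _u' hu' u hu => hu' u (h hu)

lemma polar_polar_polar {I : Type*} (X : Set (I → ℝ≥0)) :
    polar (polar (polar X)) = polar X :=
  le_antisymm (polar_antitone (subset_polar_polar X)) (subset_polar_polar (polar X))

lemma single_le_pairing {I : Type*} (u u' : I → ℝ≥0) (i : I) :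
    (u i : ℝ≥0∞) * (u' i : ℝ≥0∞) ≤ pairing u u' :=
  ENNReal.le_tsum i

theorem limpl_isPCS {I J : Type*} [Countable I] [Countable J]
    (P : Set (I → ℝ≥0)) (Q : Set (J → ℝ≥0)) (hP : IsPCS P) (hQ : IsPCS Q) :
    IsPCS (polar {w : I × J → ℝ≥0 | ∃ u ∈ P, ∃ v' ∈ polar Q, w = fun p => u p.1 * v' p.2}) := by
  classical
  obtain ⟨hP1, hP2, hP3⟩ := hP
  obtain ⟨hQ1, hQ2, hQ3⟩ := hQ
  refine ⟨polar_polar_polar _, ?_, ?_⟩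
  · -- existence of a positive element
    rintro ⟨a, b⟩
    obtain ⟨A, hA, hAbd⟩ := hP3 a
    obtain ⟨v, hv, hvb⟩ := hQ2 b
    set ε : ℝ≥0 := v b * A⁻¹ with hε
    refine ⟨fun p => if p = (a, b) then ε else 0, ?_, ?_⟩
    · rintro w ⟨u, hu, v', hv', rfl⟩
      have key : pairing (fun p : I × J => u p.1 * v' p.2)
          (fun p => if p = (a, b) then ε else 0)
          = (u a : ℝ≥0∞) * (v' b) * ε := by
        unfold pairing
        rw [tsum_eq_single (a, b)]
        · simp [mul_assoc]
        · intro p hp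
          simp [hp]
      rw [key]
      -- bound: u a ≤ A, v' b ≤ (v b)⁻¹
      have hv'b : v' b ≤ (v b)⁻¹ := by
        have h1 : (v b : ℝ≥0∞) * (v' b) ≤ 1 :=
          le_trans (single_le_pairing v v' b) (hv' v hv)
        have h2 : v b * v' b ≤ 1 := by exact_mod_cast h1
        exact (NNReal.le_inv_iff_mul_le (ne_of_gt hvb)).2 (by rwa [mul_comm])
      have hle : (u a : ℝ≥0∞) * (v' b) * ε ≤ (A : ℝ≥0∞) * ((v b)⁻¹ : ℝ≥0) * ε := by
        have h1 : (u a : ℝ≥0∞) ≤ A := by exact_mod_cast hAbd u hu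
        have h2 : (v' b : ℝ≥0∞) ≤ ((v b)⁻¹ : ℝ≥0) := by exact_mod_cast hv'b
        exact mul_le_mul' (mul_le_mul' h1 h2) le_rfl
      refine le_trans hle (le_of_eq ?_)
      have heq : (A : ℝ≥0) * (v b)⁻¹ * ε = 1 := by
        rw [hε]
        field_simp
      calc (A : ℝ≥0∞) * ((v b)⁻¹ : ℝ≥0) * ε = ((A * (v b)⁻¹ * ε : ℝ≥0) : ℝ≥0∞) := by
            push_cast; ring
        _ = 1 := by rw [heq]; simp
    · simp only [if_pos rfl]
      exact mul_pos hvb (inv_pos.2 hA)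
  · -- boundedness
    rintro ⟨a, b⟩
    obtain ⟨u, hu, hua⟩ := hP2 a
    obtain ⟨B, hB, hBbd⟩ := hQ3 b
    -- v' := (1/B) δ_b ∈ polar Q with v' b > 0
    set v' : J → ℝ≥0 := fun j => if j = b then B⁻¹ else 0 with hv'def
    have hv' : v' ∈ polar Q := by
      intro v hv
      have key : pairing v v' = (v b : ℝ≥0∞) * (B⁻¹ : ℝ≥0) := by
        unfold pairing
        rw [tsum_eq_single b]
        · simp [hv'def]
        · intro j hj
          simp [hv'def, hj]
      rw [key]
      have : v b * B⁻¹ ≤ 1 := by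
        calc v b * B⁻¹ ≤ B * B⁻¹ := by gcongr; exact hBbd v hv
          _ = 1 := mul_inv_cancel₀ (ne_of_gt hB)
      calc (v b : ℝ≥0∞) * (B⁻¹ : ℝ≥0) = ((v b * B⁻¹ : ℝ≥0) : ℝ≥0∞) := by push_cast; ring
        _ ≤ 1 := by exact_mod_cast this
    have hv'b : 0 < v' b := by simp only [hv'def, if_pos rfl]; exact inv_pos.2 hB
    refine ⟨(u a * v' b)⁻¹, ?_, ?_⟩
    · exact inv_pos.2 (mul_pos hua hv'b)
    · intro t ht
      have hw : (fun p : I × J => u p.1 * v' p.2) ∈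
          {w : I × J → ℝ≥0 | ∃ u ∈ P, ∃ v' ∈ polar Q, w = fun p => u p.1 * v' p.2} :=
        ⟨u, hu, v', hv', rfl⟩
      have h1 : ((u a * v' b : ℝ≥0) : ℝ≥0∞) * (t (a, b)) ≤ 1 := by
        refine le_trans ?_ (ht _ hw)
        have := single_le_pairing (fun p : I × J => u p.1 * v' p.2) t (a, b)
        simpa using this
      have h2 : (u a * v' b) * t (a, b) ≤ 1 := by exact_mod_cast h1
      have hpos : (0 : ℝ≥0) < u a * v' b := by positivity
      exact (NNReal.le_inv_iff_mul_le (ne_of_gt hpos)).2 (by rwa [mul_comm])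
end

section
/- Let X = (I, P) and Y = (J, Q) be PCSs and let s : (Multiset I) × J → ℝ≥0. Then s belongs to the polar of {u^! ⊗ v' | u ∈ P, v' ∈ Q^⊥} ⊆ (ℝ≥0)^{(Multiset I)×J} (where (u^! ⊗ v')_{(μ,b)} = u^μ · v'_b) if and only if for every u ∈ P, every value ŝ(u)_b = ∑'_{μ ∈ Multiset I} s_{(μ,b)} · u^μ is finite and the function b ↦ ŝ(u)_b belongs to Q. -/
open scoped NNReal ENNReal

/-- `u^μ`: the product, with multiplicities, of the values `u a` for `a ∈ μ`. -/
noncomputable def mpow {I : Type*} (u : I → ℝ≥0) (μ : Multiset I) : ℝ≥0 := (μ.map u).prod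

/-- Kleisli application `ŝ(u)_b = ∑' μ, s (μ,b) * u^μ` in `[0,∞]`. -/
noncomputable def kApp {I J : Type*} (s : Multiset I × J → ℝ≥0) (u : I → ℝ≥0) (b : J) : ℝ≥0∞ :=
  ∑' μ : Multiset I, (s (μ, b) : ℝ≥0∞) * (mpow u μ : ℝ≥0∞)

/-- `s` is a Kleisli morphism from `P` to `Q`. -/
def IsKleisli {I J : Type*} (s : Multiset I × J → ℝ≥0)
    (P : Set (I → ℝ≥0)) (Q : Set (J → ℝ≥0)) : Prop :=
  ∀ u ∈ P, (∀ b, kApp s u b ≠ ⊤) ∧ (fun b => (kApp s u b).toNNReal) ∈ Q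

lemma rearrange {I J : Type*} (s : Multiset I × J → ℝ≥0) (u : I → ℝ≥0) (v' : J → ℝ≥0) :
    ∑' p : Multiset I × J, ((mpow u p.1 * v' p.2 : ℝ≥0) : ℝ≥0∞) * (s p : ℝ≥0∞)
      = ∑' b, kApp s u b * (v' b : ℝ≥0∞) := by
  have h1 : ∑' p : Multiset I × J, ((mpow u p.1 * v' p.2 : ℝ≥0) : ℝ≥0∞) * (s p : ℝ≥0∞)
      = ∑' (μ : Multiset I) (b : J), ((mpow u μ * v' b : ℝ≥0) : ℝ≥0∞) * (s (μ, b) : ℝ≥0∞) :=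
    ENNReal.tsum_prod (f := fun μ b => ((mpow u μ * v' b : ℝ≥0) : ℝ≥0∞) * (s (μ, b) : ℝ≥0∞))
  rw [h1, ENNReal.tsum_comm]
  refine tsum_congr fun b => ?_
  rw [kApp, ← ENNReal.tsum_mul_right]
  refine tsum_congr fun μ => ?_
  push_cast
  ring

theorem kleisli_morph_charact {I J : Type*} [Countable I] [Countable J]
    (P : Set (I → ℝ≥0)) (Q : Set (J → ℝ≥0)) (hP : IsPCS P) (hQ : IsPCS Q)
    (s : Multiset I × J → ℝ≥0) :
    s ∈ polar {w : Multiset I × J → ℝ≥0 |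
        ∃ u ∈ P, ∃ v' ∈ polar Q, w = fun p => mpow u p.1 * v' p.2} ↔
      IsKleisli s P Q := by
  classical
  constructor
  · intro hs u hu
    have key : ∀ v' ∈ polar Q, ∑' b, kApp s u b * (v' b : ℝ≥0∞) ≤ 1 := by
      intro v' hv'
      have h := hs _ ⟨u, hu, v', hv', rfl⟩
      rw [pairing] at h
      rw [← rearrange s u v']
      exact h
    have hfin : ∀ b, kApp s u b ≠ ⊤ := by
      intro b
      obtain ⟨A, hApos, hAbd⟩ := hQ.2.2 b
      set v' : J → ℝ≥0 := fun c => if c = b then A⁻¹ else 0 with hv'def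
      have hv' : v' ∈ polar Q := by
        intro v hv
        rw [pairing]
        have : ∑' c, (v c : ℝ≥0∞) * (v' c : ℝ≥0∞) = (v b : ℝ≥0∞) * (A⁻¹ : ℝ≥0) := by
          rw [tsum_eq_single b]
          · simp [hv'def]
          · intro c hc; simp [hv'def, hc]
        rw [this, ENNReal.coe_inv hApos.ne']
        calc (v b : ℝ≥0∞) * (A : ℝ≥0∞)⁻¹ ≤ (A : ℝ≥0∞) * (A : ℝ≥0∞)⁻¹ := by
              gcongr
              exact_mod_cast hAbd v hv
          _ = 1 := ENNReal.mul_inv_cancel (by exact_mod_cast hApos.ne') ENNReal.coe_ne_top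
      have hle := key v' hv'
      have hb : kApp s u b * (A : ℝ≥0∞)⁻¹ ≤ 1 := by
        refine le_trans ?_ hle
        have := ENNReal.le_tsum (f := fun c => kApp s u c * (v' c : ℝ≥0∞)) b
        simpa [hv'def, ENNReal.coe_inv hApos.ne'] using this
      intro htop
      rw [htop] at hb
      rw [ENNReal.top_mul (by simp [hApos.ne'])] at hb
      exact absurd hb (by simp)
    refine ⟨hfin, ?_⟩
    rw [← hQ.1]
    intro v' hv'
    rw [pairing]
    have : ∑' b, ((v' b : ℝ≥0∞)) * ((kApp s u b).toNNReal : ℝ≥0∞)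
        = ∑' b, kApp s u b * (v' b : ℝ≥0∞) := by
      refine tsum_congr fun b => ?_
      rw [ENNReal.coe_toNNReal (hfin b), mul_comm]
    rw [this]
    exact key v' hv'
  · rintro hk w ⟨u, hu, v', hv', rfl⟩
    obtain ⟨hfin, hmem⟩ := hk u hu
    rw [pairing]
    have h2 : ∑' p : Multiset I × J, ((mpow u p.1 * v' p.2 : ℝ≥0) : ℝ≥0∞) * (s p : ℝ≥0∞)
        = ∑' b, kApp s u b * (v' b : ℝ≥0∞) := rearrange s u v'
    rw [h2]
    have h3 := hv' _ hmem
    rw [pairing] at h3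
    refine le_trans (le_of_eq ?_) h3
    refine tsum_congr fun b => ?_
    rw [ENNReal.coe_toNNReal (hfin b), mul_comm]
end

section
/- Let X = (I, P) and Y = (J, Q) be PCSs and let s : (Multiset I) × J → ℝ≥0 be a Kleisli morphism from P to Q. Then the induced function ŝ : P → Q is Scott continuous: it is monotone for the pointwise orders, and for every nonempty directed D ⊆ P with pointwise supremum v ∈ P, one has ŝ(v)_b = ⨆_{u∈D} ŝ(u)_b for every b ∈ J. -/
open scoped NNReal ENNReal

lemma mpow_zero {I : Type*} (u : I → ℝ≥0) : mpow u 0 = 1 := by simp [mpow]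

lemma mpow_cons {I : Type*} (u : I → ℝ≥0) (a : I) (μ : Multiset I) :
    mpow u (a ::ₘ μ) = u a * mpow u μ := by simp [mpow]

lemma mpow_mono {I : Type*} {u v : I → ℝ≥0} (h : u ≤ v) (μ : Multiset I) :
    mpow u μ ≤ mpow v μ := by
  induction μ using Multiset.induction with
  | empty => simp [mpow_zero]
  | cons a μ ih =>
    rw [mpow_cons, mpow_cons]
    exact mul_le_mul' (h a) ih

lemma kApp_mono {I J : Type*} (s : Multiset I × J → ℝ≥0) {u v : I → ℝ≥0} (h : u ≤ v) (b : J) :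
    kApp s u b ≤ kApp s v b := by
  refine ENNReal.tsum_le_tsum fun μ => ?_
  exact mul_le_mul_right (ENNReal.coe_le_coe.mpr (mpow_mono h μ)) _

theorem kleisli_scott_continuous {I J : Type*} [Countable I] [Countable J]
    (P : Set (I → ℝ≥0)) (Q : Set (J → ℝ≥0)) (hP : IsPCS P) (hQ : IsPCS Q)
    (s : Multiset I × J → ℝ≥0) (hs : IsKleisli s P Q) :
    (∀ u ∈ P, ∀ v ∈ P, u ≤ v → ∀ b, kApp s u b ≤ kApp s v b) ∧
    (∀ D : Set (I → ℝ≥0), D ⊆ P → D.Nonempty → DirectedOn (· ≤ ·) D →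
      ∀ v ∈ P, IsLUB D v → ∀ b, kApp s v b = ⨆ u : D, kApp s (u : I → ℝ≥0) b) := by
  classical
  constructor
  · intro u _ v _ huv b
    exact kApp_mono s huv b
  · intro D hDP hD0 hDdir v hvP hlub b
    have hne : Nonempty D := hD0.to_subtype
    -- pointwise: v a is an upper bound and least among values at a
    have hub : ∀ u : D, (u : I → ℝ≥0) ≤ v := fun u => hlub.1 u.2
    have hpt : ∀ a : I, (v a : ℝ≥0∞) = ⨆ u : D, ((u : I → ℝ≥0) a : ℝ≥0∞) := by
      intro a
      have hle : (⨆ u : D, ((u : I → ℝ≥0) a : ℝ≥0∞)) ≤ (v a : ℝ≥0∞) :=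
        iSup_le fun u => ENNReal.coe_le_coe.mpr (hub u a)
      refine le_antisymm ?_ hle
      set S := ⨆ u : D, ((u : I → ℝ≥0) a : ℝ≥0∞) with hS
      have hStop : S ≠ ⊤ := ne_top_of_le_ne_top ENNReal.coe_ne_top hle
      -- S.toNNReal is an upper bound for the values at a
      have hubS : ∀ u : D, (u : I → ℝ≥0) a ≤ S.toNNReal := by
        intro u
        have : ((u : I → ℝ≥0) a : ℝ≥0∞) ≤ S := le_iSup (fun u : D => ((u : I → ℝ≥0) a : ℝ≥0∞)) u
        exact (ENNReal.coe_le_iff.mp (this.trans_eq (ENNReal.coe_toNNReal hStop).symm)) _ rfl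
      -- the modified function is an upper bound of D
      set w : I → ℝ≥0 := fun i => if i = a then min (v a) S.toNNReal else v i with hw
      have hwub : w ∈ upperBounds D := by
        intro u hu
        intro i
        by_cases hi : i = a
        · subst hi
          simp only [hw, if_pos rfl]
          exact le_min (hub ⟨u, hu⟩ i) (hubS ⟨u, hu⟩)
        · simp only [hw, if_neg hi]
          exact hub ⟨u, hu⟩ i
      have := hlub.2 hwub a
      simp only [hw, if_pos rfl] at this
      have hva : v a ≤ S.toNNReal := le_trans this (min_le_right _ _)
      calc (v a : ℝ≥0∞) ≤ (S.toNNReal : ℝ≥0∞) := ENNReal.coe_le_coe.mpr hva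
        _ = S := ENNReal.coe_toNNReal hStop
    -- mpow version
    have hmpow : ∀ μ : Multiset I, (mpow v μ : ℝ≥0∞) = ⨆ u : D, (mpow (u : I → ℝ≥0) μ : ℝ≥0∞) := by
      intro μ
      induction μ using Multiset.induction with
      | empty => simp [mpow_zero]
      | cons a μ ih =>
        have hle : (⨆ u : D, (mpow (u : I → ℝ≥0) (a ::ₘ μ) : ℝ≥0∞)) ≤ (mpow v (a ::ₘ μ) : ℝ≥0∞) :=
          iSup_le fun u => ENNReal.coe_le_coe.mpr (mpow_mono (hub u) _)
        refine le_antisymm ?_ hle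
        rw [mpow_cons, ENNReal.coe_mul, hpt a, ih, ENNReal.iSup_mul]
        refine iSup_le fun u => ?_
        rw [ENNReal.mul_iSup]
        refine iSup_le fun u' => ?_
        obtain ⟨k, hk, hk1, hk2⟩ := hDdir u u.2 u' u'.2
        refine le_trans ?_ (le_iSup _ (⟨k, hk⟩ : D))
        rw [← ENNReal.coe_mul]
        refine ENNReal.coe_le_coe.mpr ?_
        rw [mpow_cons]
        exact mul_le_mul' (hk1 a) (mpow_mono hk2 μ)
    -- main equality
    refine le_antisymm ?_ (iSup_le fun u => kApp_mono s (hub u) b)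
    rw [kApp, ENNReal.tsum_eq_iSup_sum]
    refine iSup_le fun F => ?_
    have : ∑ μ ∈ F, (s (μ, b) : ℝ≥0∞) * (mpow v μ : ℝ≥0∞)
        = ⨆ u : D, ∑ μ ∈ F, (s (μ, b) : ℝ≥0∞) * (mpow (u : I → ℝ≥0) μ : ℝ≥0∞) := by
      have : ∀ μ ∈ F, (s (μ, b) : ℝ≥0∞) * (mpow v μ : ℝ≥0∞)
          = ⨆ u : D, (s (μ, b) : ℝ≥0∞) * (mpow (u : I → ℝ≥0) μ : ℝ≥0∞) := by
        intro μ _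
        rw [hmpow μ, ENNReal.mul_iSup]
      rw [Finset.sum_congr rfl this]
      refine ENNReal.finsetSum_iSup fun u u' => ?_
      obtain ⟨k, hk, hk1, hk2⟩ := hDdir u u.2 u' u'.2
      refine ⟨⟨k, hk⟩, fun μ => ⟨?_, ?_⟩⟩
      · exact mul_le_mul_right (ENNReal.coe_le_coe.mpr (mpow_mono hk1 μ)) _
      · exact mul_le_mul_right (ENNReal.coe_le_coe.mpr (mpow_mono hk2 μ)) _
    rw [this]
    exact iSup_mono fun u => ENNReal.sum_le_tsum F
end

section
/- Let X = (I, P) and Y = (J, Q) be PCSs and let s, s' : (Multiset I) × J → ℝ≥0 be Kleisli morphisms from P to Q. If ŝ(u) = ŝ'(u) for every u ∈ P, then s = s' as matrices, i.e., s_{(μ,b)} = s'_{(μ,b)} for all finite multisets μ over I and all b ∈ J. -/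
open scoped NNReal ENNReal

/-!
Fix `(μ₀, b)` and let `F` be the support of `μ₀`. Since `P = P^⊥⊥` and every coordinate is
positive somewhere on `P`, the vectors of `P^⊥` are bounded coordinatewise, so `P` contains every
vector supported on `F` with entries at most some `ε > 0`. On `u_a = ε t x ^ (N ^ ι a)` (`a ∈ F`,
`N = |μ₀| + 1`, `ι : I → ℕ` injective), `ŝ(u)_b` is a power series in `t` and `x` whose coefficient
of `t ^ |μ₀| x ^ (∑_{a ∈ μ₀} N ^ ι a)` is `s_{(μ₀,b)} ε ^ |μ₀|` alone, by uniqueness of base-`N`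
expansions. Power series with finite coefficient sum are determined by their values on `(0, 1]`.
-/

open Finset Filter Topology

section PowerSeries

theorem tsum_mul_pow_add_le (c : ℕ → ℝ≥0∞) {t : ℝ≥0∞} (ht : t ≤ 1) (k : ℕ) :
    ∑' m, c (m + k) * t ^ (m + k) ≤ t ^ k * ∑' m, c m :=
  calc ∑' m, c (m + k) * t ^ (m + k)
      ≤ ∑' m, c (m + k) * t ^ k :=
        ENNReal.tsum_le_tsum fun m =>
          mul_le_mul_right (pow_le_pow_of_le_one zero_le ht le_add_self) _
    _ ≤ t ^ k * ∑' m, c m := by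
        rw [ENNReal.tsum_mul_right, mul_comm]
        exact mul_le_mul_right (ENNReal.tsum_comp_le_tsum_of_injective (add_left_injective k) c) _

theorem le_of_forall_le_add_mul {a b M : ℝ≥0∞} (hM : M ≠ ∞)
    (h : ∀ t : ℝ≥0, 0 < t → t ≤ 1 → a ≤ b + t * M) : a ≤ b := by
  have hlim : Tendsto (fun t : ℝ≥0 => b + t * M) (𝓝[>] 0) (𝓝 b) := by
    have := (ENNReal.Tendsto.mul_const (ENNReal.continuous_coe.tendsto 0) (Or.inr hM)).const_add b
    simpa using tendsto_nhdsWithin_of_tendsto_nhds this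
  refine ge_of_tendsto hlim ?_
  filter_upwards [Ioc_mem_nhdsGT zero_lt_one] with t ht using h t ht.1 ht.2

variable {c d : ℕ → ℝ≥0∞}

theorem le_of_forall_tsum_mul_pow_eq (hd : ∑' n, d n ≠ ∞) {n : ℕ} (hlt : ∀ j < n, c j = d j)
    (h : ∀ t : ℝ≥0, 0 < t → t ≤ 1 → ∑' j, c j * t ^ j = ∑' j, d j * t ^ j) : c n ≤ d n := by
  refine le_of_forall_le_add_mul hd fun t ht0 ht1 => ?_
  have ht1' : (t : ℝ≥0∞) ≤ 1 := by exact_mod_cast ht1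
  have hlow : ∑ j ∈ range n, c j * t ^ j = ∑ j ∈ range n, d j * t ^ j :=
    sum_congr rfl fun j hj => by rw [hlt j (mem_range.1 hj)]
  have hlow_ne : ∑ j ∈ range n, d j * t ^ j ≠ ∞ :=
    ne_top_of_le_ne_top hd <| (ENNReal.sum_le_tsum _).trans' <|
      sum_le_sum fun j _ => mul_le_of_le_one_right' (pow_le_one₀ zero_le ht1')
  have htn : (t : ℝ≥0∞) ^ n ≠ 0 := pow_ne_zero _ (by exact_mod_cast ht0.ne')
  have htn' : (t : ℝ≥0∞) ^ n ≠ ∞ := by simp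
  rw [← ENNReal.mul_le_mul_iff_left htn htn', ← ENNReal.add_le_add_iff_left hlow_ne]
  calc ∑ j ∈ range n, d j * t ^ j + c n * t ^ n
      = ∑ j ∈ range (n + 1), c j * t ^ j := by rw [sum_range_succ, hlow]
    _ ≤ ∑' j, c j * t ^ j := ENNReal.sum_le_tsum _
    _ = ∑ j ∈ range (n + 1), d j * t ^ j + ∑' m, d (m + (n + 1)) * t ^ (m + (n + 1)) := by
        rw [h t ht0 ht1, ENNReal.summable.sum_add_tsum_nat_add']
    _ ≤ ∑ j ∈ range n, d j * t ^ j + d n * t ^ n + t ^ (n + 1) * ∑' m, d m := by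
        rw [sum_range_succ]; gcongr; exact tsum_mul_pow_add_le d ht1' _
    _ = ∑ j ∈ range n, d j * t ^ j + (d n + t * ∑' m, d m) * t ^ n := by ring

theorem eq_of_forall_tsum_mul_pow_eq (hc : ∑' n, c n ≠ ∞) (hd : ∑' n, d n ≠ ∞)
    (h : ∀ t : ℝ≥0, 0 < t → t ≤ 1 → ∑' n, c n * t ^ n = ∑' n, d n * t ^ n) : c = d := by
  funext n
  induction n using Nat.strong_induction_on with
  | _ n ih =>
    exact le_antisymm (le_of_forall_tsum_mul_pow_eq hd ih h)
      (le_of_forall_tsum_mul_pow_eq hc (fun j hj => (ih j hj).symm)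
        fun t ht0 ht1 => (h t ht0 ht1).symm)

end PowerSeries

section Fibers

variable {α : Type*}

theorem tsum_mul_pow_eq_tsum_fiber (f : α → ℝ≥0∞) (g : α → ℕ) (t : ℝ≥0∞) :
    ∑' a, f a * t ^ g a = ∑' n, (∑' a, if g a = n then f a else 0) * t ^ n :=
  calc ∑' a, f a * t ^ g a = ∑' a, ∑' n, if g a = n then f a * t ^ n else 0 :=
        tsum_congr fun a => (tsum_ite_eq' (g a) fun n => f a * t ^ n).symm
    _ = ∑' n, ∑' a, if g a = n then f a * t ^ n else 0 := ENNReal.tsum_comm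
    _ = ∑' n, (∑' a, if g a = n then f a else 0) * t ^ n := by
        simp only [← ENNReal.tsum_mul_right, ite_mul, zero_mul]

variable {c d : α → ℝ≥0∞}

theorem tsum_fiber_eq_of_forall_tsum_mul_pow_eq (g : α → ℕ) (hc : ∑' a, c a ≠ ∞)
    (hd : ∑' a, d a ≠ ∞)
    (h : ∀ t : ℝ≥0, 0 < t → t ≤ 1 → ∑' a, c a * t ^ g a = ∑' a, d a * t ^ g a) (n : ℕ) :
    ∑' a, (if g a = n then c a else 0) = ∑' a, if g a = n then d a else 0 := by
  have hsum : ∀ e : α → ℝ≥0∞, ∑' n, ∑' a, (if g a = n then e a else 0) = ∑' a, e a := fun e => by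
    simpa using (tsum_mul_pow_eq_tsum_fiber e g 1).symm
  refine congrFun (eq_of_forall_tsum_mul_pow_eq (c := fun n => ∑' a, if g a = n then c a else 0)
    (d := fun n => ∑' a, if g a = n then d a else 0) ?_ ?_ fun t ht0 ht1 => ?_) n
  · rwa [hsum]
  · rwa [hsum]
  · simpa only [← tsum_mul_pow_eq_tsum_fiber] using h t ht0 ht1

theorem tsum_fiber₂_eq_of_forall_tsum_mul_pow_mul_pow_eq (g₁ g₂ : α → ℕ)
    (hc : ∑' a, c a ≠ ∞) (hd : ∑' a, d a ≠ ∞)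
    (h : ∀ t x : ℝ≥0, 0 < t → t ≤ 1 → 0 < x → x ≤ 1 →
      ∑' a, c a * t ^ g₁ a * x ^ g₂ a = ∑' a, d a * t ^ g₁ a * x ^ g₂ a) (n m : ℕ) :
    ∑' a, (if g₁ a = n ∧ g₂ a = m then c a else 0) =
      ∑' a, if g₁ a = n ∧ g₂ a = m then d a else 0 := by
  have hle : ∀ e : α → ℝ≥0∞, ∀ x : ℝ≥0, x ≤ 1 → ∑' a, e a * x ^ g₂ a ≤ ∑' a, e a :=
    fun e x hx => ENNReal.tsum_le_tsum fun a =>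
      mul_le_of_le_one_right' (pow_le_one₀ zero_le (by exact_mod_cast hx))
  have hfiber_le : ∀ e : α → ℝ≥0∞, ∑' a, (if g₁ a = n then e a else 0) ≤ ∑' a, e a :=
    fun e => ENNReal.tsum_le_tsum fun a => by split_ifs <;> simp
  have hgraded : ∀ x : ℝ≥0, 0 < x → x ≤ 1 →
      ∑' a, (if g₁ a = n then c a else 0) * x ^ g₂ a =
        ∑' a, (if g₁ a = n then d a else 0) * x ^ g₂ a := fun x hx0 hx1 => by
    simp only [ite_mul, zero_mul]
    refine tsum_fiber_eq_of_forall_tsum_mul_pow_eq g₁ (ne_top_of_le_ne_top hc (hle c x hx1))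
      (ne_top_of_le_ne_top hd (hle d x hx1)) (fun t ht0 ht1 => ?_) n
    simpa only [mul_right_comm _ ((x : ℝ≥0∞) ^ _)] using h t x ht0 ht1 hx0 hx1
  simpa only [ite_and, and_comm (a := g₁ _ = n)] using
    tsum_fiber_eq_of_forall_tsum_mul_pow_eq g₂ (ne_top_of_le_ne_top hc (hfiber_le c))
      (ne_top_of_le_ne_top hd (hfiber_le d)) hgraded m

end Fibers

theorem Nat.eq_of_sum_range_mul_pow_eq {N : ℕ} {g h : ℕ → ℕ} (hg : ∀ j, g j < N)
    (hh : ∀ j, h j < N) {K : ℕ}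
    (hgh : ∑ j ∈ range K, g j * N ^ j = ∑ j ∈ range K, h j * N ^ j) : ∀ j < K, g j = h j := by
  induction K generalizing g h with
  | zero => intro j hj; omega
  | succ K ih =>
    have hN : 0 < N := (Nat.zero_le _).trans_lt (hg 0)
    have hsplit : ∀ e : ℕ → ℕ,
        ∑ j ∈ range (K + 1), e j * N ^ j = e 0 + N * ∑ j ∈ range K, e (j + 1) * N ^ j :=
      fun e => by
        rw [sum_range_succ', mul_sum, pow_zero, mul_one, add_comm]
        exact congrArg _ (sum_congr rfl fun j _ => by ring)
    rw [hsplit, hsplit] at hgh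
    have h0 : g 0 = h 0 := by
      simpa [Nat.add_mul_mod_self_left, Nat.mod_eq_of_lt (hg 0), Nat.mod_eq_of_lt (hh 0)]
        using congrArg (· % N) hgh
    have htail := ih (fun j => hg (j + 1)) (fun j => hh (j + 1))
      (Nat.eq_of_mul_eq_mul_left hN (Nat.add_left_cancel (h0 ▸ hgh)))
    rintro (_ | j) hj
    · exact h0
    · exact htail j (by omega)

theorem Multiset.sum_map_pow_eq_sum_range_count (N : ℕ) {μ : Multiset ℕ} {K : ℕ}
    (hK : μ.toFinset ⊆ Finset.range K) :
    (μ.map (N ^ ·)).sum = ∑ j ∈ Finset.range K, μ.count j * N ^ j := by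
  rw [Finset.sum_multiset_map_count]
  refine Finset.sum_subset hK fun j _ hj => ?_
  simp [count_eq_zero_of_notMem (fun h => hj (mem_toFinset.2 h))]

theorem Multiset.eq_of_sum_map_pow_eq {I : Type*} {ι : I → ℕ} (hι : Function.Injective ι)
    {N : ℕ} {μ ν : Multiset I} (hμ : card μ < N) (hν : card ν < N)
    (h : (μ.map fun a => N ^ ι a).sum = (ν.map fun a => N ^ ι a).sum) : μ = ν := by
  obtain ⟨K, hK⟩ := Finset.exists_nat_subset_range ((μ + ν).map ι).toFinset
  have hsub : ∀ ρ ≤ μ + ν, (ρ.map ι).toFinset ⊆ Finset.range K := fun ρ hρ =>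
    (toFinset_subset.2 (map_subset_map (subset_of_le hρ))).trans hK
  have hcount : ∀ ρ : Multiset I, card ρ < N → ∀ j, (ρ.map ι).count j < N := fun ρ hρ j =>
    ((count_le_card _ _).trans (card_map _ _).le).trans_lt hρ
  have hdigits := Nat.eq_of_sum_range_mul_pow_eq (hcount μ hμ) (hcount ν hν) (K := K) (by
    rw [← sum_map_pow_eq_sum_range_count N (hsub μ (le_add_right _ _)),
      ← sum_map_pow_eq_sum_range_count N (hsub ν (le_add_left _ _))]
    simpa only [map_map, Function.comp_def] using h)
  refine map_injective hι (ext.2 fun j => ?_)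
  by_cases hj : j < K
  · exact hdigits j hj
  · have hj' : j ∉ (μ + ν).map ι := fun hmem =>
      hj (Finset.mem_range.1 (hK (mem_toFinset.2 hmem)))
    simp only [map_add, mem_add, not_or] at hj'
    rw [count_eq_zero_of_notMem hj'.1, count_eq_zero_of_notMem hj'.2]

section Mpow

variable {I J : Type*}

theorem mpow_ite (p : I → Prop) [DecidablePred p] (f : I → ℝ≥0) (μ : Multiset I) :
    mpow (fun a => if p a then f a else 0) μ = if ∀ a ∈ μ, p a then mpow f μ else 0 := by
  induction μ using Multiset.induction with
  | empty => simp [mpow]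
  | cons a μ ih =>
    simp only [mpow] at ih ⊢
    by_cases ha : p a <;> simp [ha, ih, mul_ite]

theorem mpow_mul_pow (c x : ℝ≥0) (w : I → ℕ) (μ : Multiset I) :
    mpow (fun a => c * x ^ w a) μ = c ^ Multiset.card μ * x ^ (μ.map w).sum := by
  induction μ using Multiset.induction with
  | empty => simp [mpow]
  | cons a μ ih =>
    simp only [mpow] at ih ⊢
    simp only [Multiset.map_cons, Multiset.prod_cons, ih, Multiset.card_cons, Multiset.sum_cons]
    ring

theorem kApp_ite_mul_pow (s : Multiset I × J → ℝ≥0) (p : I → Prop) [DecidablePred p]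
    (c x : ℝ≥0) (w : I → ℕ) (b : J) :
    kApp s (fun a => if p a then c * x ^ w a else 0) b =
      ∑' μ, (if ∀ a ∈ μ, p a then (s (μ, b) : ℝ≥0∞) else 0) *
        c ^ Multiset.card μ * x ^ (μ.map w).sum :=
  tsum_congr fun μ => by
    rw [mpow_ite, mpow_mul_pow]
    split_ifs <;> push_cast <;> ring

end Mpow

section Polar

variable {I : Type*} {P : Set (I → ℝ≥0)}

theorem exists_forall_mem_polar_le (hpos : ∀ a, ∃ u ∈ P, 0 < u a) (a : I) :
    ∃ B : ℝ≥0, ∀ u' ∈ polar P, u' a ≤ B := by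
  obtain ⟨u, hu, hua⟩ := hpos a
  refine ⟨(u a)⁻¹, fun u' hu' => (NNReal.le_inv_iff_mul_le hua.ne').2 ?_⟩
  have : (u a : ℝ≥0∞) * u' a ≤ 1 := (ENNReal.le_tsum a).trans (hu' u hu)
  rw [mul_comm]
  exact_mod_cast this

theorem exists_pos_forall_le_mem (hP : polar (polar P) ⊆ P) (hpos : ∀ a, ∃ u ∈ P, 0 < u a)
    (F : Finset I) : ∃ ε > 0, ∀ v : I → ℝ≥0, (∀ a ∉ F, v a = 0) → (∀ a, v a ≤ ε) → v ∈ P := by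
  choose B hB using exists_forall_mem_polar_le hpos
  refine ⟨(∑ a ∈ F, B a + 1)⁻¹, by positivity, fun v hv0 hvε => hP fun u' hu' => ?_⟩
  have hB_le : ∑ a ∈ F, B a * (∑ a ∈ F, B a + 1)⁻¹ ≤ 1 := by
    rw [← Finset.sum_mul, ← div_eq_mul_inv]
    exact div_le_one_of_le₀ le_self_add zero_le
  calc pairing u' v = ∑ a ∈ F, (u' a : ℝ≥0∞) * v a := tsum_eq_sum fun a ha => by simp [hv0 a ha]
    _ ≤ ∑ a ∈ F, ((B a * (∑ a ∈ F, B a + 1)⁻¹ : ℝ≥0) : ℝ≥0∞) := by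
        gcongr with a
        push_cast
        gcongr
        · exact_mod_cast hB a u' hu'
        · exact_mod_cast hvε a
    _ ≤ 1 := by exact_mod_cast hB_le

end Polar

theorem kleisli_ext_general {I J : Type*} [Countable I]
    (P : Set (I → ℝ≥0)) (Q : Set (J → ℝ≥0)) (hP : IsPCS P)
    (s s' : Multiset I × J → ℝ≥0) (hs : IsKleisli s P Q) (hs' : IsKleisli s' P Q)
    (h : ∀ u ∈ P, ∀ b, kApp s u b = kApp s' u b) :
    s = s' := by
  classical
  obtain ⟨ι, hι⟩ := exists_injective_nat I
  funext ⟨μ₀, b⟩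
  obtain ⟨ε, hε, hεP⟩ := exists_pos_forall_le_mem hP.1.le hP.2.1 μ₀.toFinset
  set n₀ := Multiset.card μ₀
  set w : I → ℕ := fun a => (n₀ + 1) ^ ι a
  set deg : Multiset I → ℕ := fun μ => (μ.map w).sum
  let U (t x : ℝ≥0) (a : I) : ℝ≥0 := if a ∈ μ₀.toFinset then ε * t * x ^ w a else 0
  let C (r : Multiset I × J → ℝ≥0) (μ : Multiset I) : ℝ≥0∞ :=
    (if ∀ a ∈ μ, a ∈ μ₀.toFinset then (r (μ, b) : ℝ≥0∞) else 0) * ε ^ Multiset.card μ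
  have hU (t x : ℝ≥0) (ht : t ≤ 1) (hx : x ≤ 1) : U t x ∈ P :=
    hεP _ (fun a ha => if_neg ha) fun a => by
      unfold U
      split_ifs
      · exact (mul_le_of_le_one_right' (pow_le_one₀ zero_le hx)).trans (mul_le_of_le_one_right' ht)
      · exact zero_le
  have hkApp (r : Multiset I × J → ℝ≥0) (t x : ℝ≥0) :
      kApp r (U t x) b = ∑' μ, C r μ * t ^ Multiset.card μ * x ^ deg μ := by
    rw [kApp_ite_mul_pow]
    exact tsum_congr fun μ => by push_cast; ring
  have hfin (r : Multiset I × J → ℝ≥0) (hr : IsKleisli r P Q) : ∑' μ, C r μ ≠ ∞ := by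
    simpa [hkApp] using (hr _ (hU 1 1 le_rfl le_rfl)).1 b
  have hsingle (r : Multiset I × J → ℝ≥0) :
      ∑' μ, (if Multiset.card μ = n₀ ∧ deg μ = deg μ₀ then C r μ else 0) = r (μ₀, b) * ε ^ n₀ := by
    rw [tsum_eq_single μ₀ fun μ hne => if_neg fun (hμ : Multiset.card μ = n₀ ∧ _) => hne <|
      Multiset.eq_of_sum_map_pow_eq hι (hμ.1 ▸ n₀.lt_succ_self) n₀.lt_succ_self hμ.2,
      if_pos ⟨rfl, rfl⟩]
    exact congrArg (· * _) (if_pos fun a ha => Multiset.mem_toFinset.2 ha)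
  have hcoeff := tsum_fiber₂_eq_of_forall_tsum_mul_pow_mul_pow_eq Multiset.card deg
    (hfin s hs) (hfin s' hs') (fun t x _ ht _ hx => by
      simpa only [← hkApp] using h _ (hU t x ht hx) b) n₀ (deg μ₀)
  rw [hsingle, hsingle] at hcoeff
  have hεn : (ε : ℝ≥0∞) ^ n₀ ≠ 0 := pow_ne_zero _ (by exact_mod_cast hε.ne')
  exact_mod_cast (ENNReal.mul_left_inj hεn (by simp)).1 hcoeff

theorem kleisli_ext {I J : Type*} [Countable I] [Countable J]
    (P : Set (I → ℝ≥0)) (Q : Set (J → ℝ≥0)) (hP : IsPCS P) (hQ : IsPCS Q)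
    (s s' : Multiset I × J → ℝ≥0) (hs : IsKleisli s P Q) (hs' : IsKleisli s' P Q)
    (h : ∀ u ∈ P, ∀ b, kApp s u b = kApp s' u b) :
    s = s' :=
  kleisli_ext_general P Q hP s s' hs hs' h
end

section
/- Let X = (I, P) and Y = (J, Q) be PCSs and let t : I × J → ℝ≥0 map P into Q. For finite multisets μ over I and ν over J, let L(μ,ν) be the (finite) set of finite multisets ρ over I × J whose first marginal is μ and whose second marginal is ν (i.e., mapping ρ by the first projection gives μ and by the second gives ν), and define (!t)_{(μ,ν)} = ∑_{ρ ∈ L(μ,ν)} (ν!/ρ!) · t^ρ, where for a finite multiset μ, μ! denotes the product of the factorials of its multiplicities, and t^ρ is the product with multiplicities of the values of t over ρ. Then for every u ∈ P and every finite multiset ν over J, ∑'_{μ} (!t)_{(μ,ν)} · u^μ = (t·u)^ν, i.e., !t applied to u^! equals (t·u)^!. -/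
open scoped NNReal ENNReal

/-- `μ!`: the product of the factorials of the multiplicities of `μ`. -/
noncomputable def mfact {α : Type*} (μ : Multiset α) : ℕ := by
  classical exact (μ.dedup.map fun a => (μ.count a).factorial).prod

/-- The multisets over `I × J` with first marginal `μ` and second marginal `ν`. -/
def marginals {I J : Type*} (μ : Multiset I) (ν : Multiset J) : Set (Multiset (I × J)) :=
  {ρ | ρ.map Prod.fst = μ ∧ ρ.map Prod.snd = ν}

/-- The matrix `!t`, with `(!t)_{(μ,ν)} = ∑_{ρ ∈ L(μ,ν)} (ν!/ρ!) · t^ρ`. -/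
noncomputable def bangMat {I J : Type*} (t : I × J → ℝ≥0) (μ : Multiset I) (ν : Multiset J) :
    ℝ≥0∞ :=
  ∑' ρ : marginals μ ν,
    ((mfact ν : ℝ≥0∞) / (mfact (ρ : Multiset (I × J)) : ℝ≥0∞)) *
      ((Multiset.map t (ρ : Multiset (I × J))).prod : ℝ≥0∞)

/-! ### Auxiliary lemmas -/

lemma mfact_eq_prod {α : Type*} [DecidableEq α] (μ : Multiset α) :
    mfact μ = ∏ a ∈ μ.toFinset, (μ.count a).factorial := by
  classical
  rw [mfact, Finset.prod]
  simp only [Multiset.toFinset]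
  congr!

@[simp] lemma mfact_zero' {α : Type*} : mfact (0 : Multiset α) = 1 := by
  classical simp [mfact_eq_prod]

lemma mfact_split {α : Type*} [DecidableEq α] (μ : Multiset α) (a : α) :
    mfact μ = (μ.count a).factorial * ∏ x ∈ μ.toFinset.erase a, (μ.count x).factorial := by
  classical
  by_cases h : a ∈ μ.toFinset
  · rw [mfact_eq_prod, ← Finset.mul_prod_erase μ.toFinset _ h]
  · rw [mfact_eq_prod, Finset.erase_eq_of_notMem h,
      Multiset.count_eq_zero_of_notMem (by simpa using h), Nat.factorial_zero, one_mul]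

lemma mfact_cons {α : Type*} [DecidableEq α] (a : α) (s : Multiset α) :
    mfact (a ::ₘ s) = (s.count a + 1) * mfact s := by
  classical
  rw [mfact_split (a ::ₘ s) a, mfact_split s a, Multiset.count_cons_self]
  have he : (a ::ₘ s).toFinset.erase a = s.toFinset.erase a := by
    rw [Multiset.toFinset_cons, Finset.erase_insert_eq_erase]
  have hc : ∀ x ∈ s.toFinset.erase a, ((a ::ₘ s).count x).factorial = (s.count x).factorial := by
    intro x hx
    rw [Multiset.count_cons_of_ne (Finset.ne_of_mem_erase hx)]
  rw [he, Finset.prod_congr rfl hc, Nat.factorial_succ, mul_assoc]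

lemma tsum_count {I J : Type*} [DecidableEq I] [DecidableEq J] [DecidableEq (I × J)]
    (ρ : Multiset (I × J)) (b : J) :
    ∑' a : I, (ρ.count (a, b) : ℝ≥0∞) = ((ρ.map Prod.snd).count b : ℝ≥0∞) := by
  induction ρ using Multiset.induction with
  | empty => simp
  | cons p ρ ih =>
    have h1 : ∀ a : I, ((p ::ₘ ρ).count (a, b) : ℝ≥0∞)
        = (ρ.count (a, b) : ℝ≥0∞) + (if (a, b) = p then 1 else 0) := by
      intro a; rw [Multiset.count_cons]; push_cast; simp
    rw [tsum_congr h1, ENNReal.tsum_add, ih, Multiset.map_cons, Multiset.count_cons]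
    by_cases hb : b = p.2
    · have h2 : ∀ a : I, (if (a, b) = p then (1:ℝ≥0∞) else 0) = if a = p.1 then 1 else 0 := by
        intro a
        congr 1
        simp only [eq_iff_iff, Prod.ext_iff]
        tauto
      rw [tsum_congr h2, tsum_ite_eq]
      simp [hb]
    · have h2 : ∀ a : I, (if (a, b) = p then (1:ℝ≥0∞) else 0) = 0 := by
        intro a
        simp only [ite_eq_right_iff]
        intro h; exact absurd (congrArg Prod.snd h) (by simpa using hb)
      rw [tsum_congr h2]
      simp [hb, Ne.symm hb]

/-- The weight of a multiset `ρ` over `I × J`: product of `t p * u p.1`. -/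
noncomputable def Wprod {I J : Type*} (t : I × J → ℝ≥0) (u : I → ℝ≥0)
    (ρ : Multiset (I × J)) : ℝ≥0∞ :=
  ((ρ.map fun p => t p * u p.1).prod : ℝ≥0∞)

lemma Wprod_cons {I J : Type*} (t : I × J → ℝ≥0) (u : I → ℝ≥0) (p : I × J)
    (ρ : Multiset (I × J)) :
    Wprod t u (p ::ₘ ρ) = (t p : ℝ≥0∞) * (u p.1 : ℝ≥0∞) * Wprod t u ρ := by
  rw [Wprod, Multiset.map_cons, Multiset.prod_cons]
  push_cast
  rw [Wprod]

/-- The reindexed total sum. -/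
noncomputable def Gfun {I J : Type*} (t : I × J → ℝ≥0) (u : I → ℝ≥0) (ν : Multiset J) : ℝ≥0∞ :=
  ∑' ρ : {ρ : Multiset (I × J) // ρ.map Prod.snd = ν},
    ((mfact ν : ℝ≥0∞) / (mfact ρ.1 : ℝ≥0∞)) * Wprod t u ρ.1

lemma Gfun_zero {I J : Type*} (t : I × J → ℝ≥0) (u : I → ℝ≥0) :
    Gfun t u (0 : Multiset J) = 1 := by
  rw [Gfun]
  rw [tsum_eq_single (⟨0, by simp⟩ : {ρ : Multiset (I × J) // ρ.map Prod.snd = 0})]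
  · simp [Wprod]
  · intro ρ hρ
    exact absurd (Subtype.ext (Multiset.map_eq_zero.mp ρ.2)) hρ

lemma Gfun_cons {I J : Type*} (t : I × J → ℝ≥0) (u : I → ℝ≥0) (b : J) (ν : Multiset J) :
    Gfun t u (b ::ₘ ν) = matApp t u b * Gfun t u ν := by
  classical
  have key : ∀ ρ : {ρ : Multiset (I × J) // ρ.map Prod.snd = b ::ₘ ν},
      ((mfact (b ::ₘ ν) : ℝ≥0∞) / (mfact ρ.1 : ℝ≥0∞)) * Wprod t u ρ.1
        = ∑' a : I, (ρ.1.count (a, b) : ℝ≥0∞) *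
            (((mfact ν : ℝ≥0∞) / (mfact ρ.1 : ℝ≥0∞)) * Wprod t u ρ.1) := by
    intro ρ
    rw [ENNReal.tsum_mul_right, tsum_count ρ.1 b, ρ.2, Multiset.count_cons_self,
      mfact_cons]
    push_cast
    rw [mul_div_assoc, mul_assoc]
  rw [Gfun, tsum_congr key, ENNReal.tsum_comm]
  have step : ∀ a : I,
      (∑' ρ : {ρ : Multiset (I × J) // ρ.map Prod.snd = b ::ₘ ν},
        (ρ.1.count (a, b) : ℝ≥0∞) * (((mfact ν : ℝ≥0∞) / (mfact ρ.1 : ℝ≥0∞)) * Wprod t u ρ.1))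
      = (t (a, b) : ℝ≥0∞) * (u a : ℝ≥0∞) * Gfun t u ν := by
    intro a
    set i : {ρ : Multiset (I × J) // ρ.map Prod.snd = ν} →
        {ρ : Multiset (I × J) // ρ.map Prod.snd = b ::ₘ ν} :=
      fun ρ => ⟨(a, b) ::ₘ ρ.1, by rw [Multiset.map_cons, ρ.2]⟩ with hi
    have hinj : Function.Injective i := by
      intro x y hxy
      have h := congrArg Subtype.val hxy
      exact Subtype.ext ((Multiset.cons_inj_right _).mp h)
    have hsupp : Function.support (fun ρ : {ρ : Multiset (I × J) // ρ.map Prod.snd = b ::ₘ ν} =>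
        (ρ.1.count (a, b) : ℝ≥0∞) * (((mfact ν : ℝ≥0∞) / (mfact ρ.1 : ℝ≥0∞)) * Wprod t u ρ.1))
        ⊆ Set.range i := by
      intro ρ hρ
      have hcnt : (a, b) ∈ ρ.1 := by
        by_contra hmem
        simp [Function.mem_support, Multiset.count_eq_zero_of_notMem hmem] at hρ
      have herase : ((a, b) ::ₘ ρ.1.erase (a, b)) = ρ.1 := Multiset.cons_erase hcnt
      have hmap : (ρ.1.erase (a, b)).map Prod.snd = ν := by
        have h := congrArg (Multiset.map Prod.snd) herase
        rw [Multiset.map_cons, ρ.2] at h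
        exact (Multiset.cons_inj_right b).mp h
      exact ⟨⟨ρ.1.erase (a, b), hmap⟩, Subtype.ext herase⟩
    rw [← hinj.tsum_eq hsupp]
    have hval : ∀ ρ : {ρ : Multiset (I × J) // ρ.map Prod.snd = ν},
        ((i ρ).1.count (a, b) : ℝ≥0∞) *
          (((mfact ν : ℝ≥0∞) / (mfact (i ρ).1 : ℝ≥0∞)) * Wprod t u (i ρ).1)
        = (t (a, b) : ℝ≥0∞) * (u a : ℝ≥0∞) *
            (((mfact ν : ℝ≥0∞) / (mfact ρ.1 : ℝ≥0∞)) * Wprod t u ρ.1) := by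
      intro ρ
      have h1 : (i ρ).1 = (a, b) ::ₘ ρ.1 := rfl
      have hk0 : ((ρ.1.count (a, b) + 1 : ℕ) : ℝ≥0∞) ≠ 0 := by
        exact_mod_cast (Multiset.count (a, b) ρ.1).succ_ne_zero
      have hktop : ((ρ.1.count (a, b) + 1 : ℕ) : ℝ≥0∞) ≠ ⊤ := ENNReal.natCast_ne_top _
      have hcancel : ((ρ.1.count (a, b) + 1 : ℕ) : ℝ≥0∞) *
          ((mfact ν : ℝ≥0∞) / (((ρ.1.count (a, b) + 1 : ℕ) : ℝ≥0∞) * (mfact ρ.1 : ℝ≥0∞)))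
          = (mfact ν : ℝ≥0∞) / (mfact ρ.1 : ℝ≥0∞) := by
        rw [← mul_div_assoc, ENNReal.mul_div_mul_left _ _ hk0 hktop]
      rw [h1, Multiset.count_cons_self, mfact_cons, Wprod_cons]
      push_cast [Nat.cast_mul] at hcancel ⊢
      rw [← mul_assoc, hcancel]
      ring
    rw [tsum_congr hval, ENNReal.tsum_mul_left, Gfun]
  rw [tsum_congr step, ENNReal.tsum_mul_right, matApp]

lemma lhs_eq_Gfun {I J : Type*} (t : I × J → ℝ≥0) (u : I → ℝ≥0) (ν : Multiset J) :
    ∑' μ : Multiset I, bangMat t μ ν * (mpow u μ : ℝ≥0∞) = Gfun t u ν := by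
  classical
  have hterm : ∀ μ : Multiset I, bangMat t μ ν * (mpow u μ : ℝ≥0∞)
      = ∑' ρ : marginals μ ν,
          ((mfact ν : ℝ≥0∞) / (mfact (ρ : Multiset (I × J)) : ℝ≥0∞)) * Wprod t u ρ.1 := by
    intro μ
    rw [bangMat, ← ENNReal.tsum_mul_right]
    refine tsum_congr fun ρ => ?_
    obtain ⟨r, h1, h2⟩ := ρ
    subst h1
    have : (mpow u (r.map Prod.fst) : ℝ≥0∞) = ((r.map fun p => u p.1).prod : ℝ≥0∞) := by
      rw [mpow, Multiset.map_map]
      rfl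
    show _ * _ * (mpow u (r.map Prod.fst) : ℝ≥0∞) = _ * Wprod t u r
    rw [mul_assoc, this, Wprod, ← ENNReal.coe_mul, ← Multiset.prod_map_mul]
  rw [tsum_congr hterm]
  -- reindex the double sum
  let e : {ρ : Multiset (I × J) // ρ.map Prod.snd = ν} ≃ Σ μ : Multiset I, marginals μ ν :=
    { toFun := fun ρ => ⟨ρ.1.map Prod.fst, ⟨ρ.1, rfl, ρ.2⟩⟩
      invFun := fun σ => ⟨σ.2.1, σ.2.2.2⟩
      left_inv := fun ρ => rfl
      right_inv := fun σ => by
        rcases σ with ⟨μ, ρ, h1, h2⟩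
        subst h1
        rfl }
  calc ∑' μ : Multiset I, ∑' ρ : marginals μ ν,
        ((mfact ν : ℝ≥0∞) / (mfact (ρ : Multiset (I × J)) : ℝ≥0∞)) * Wprod t u ρ.1
      = ∑' σ : Σ μ : Multiset I, marginals μ ν,
          ((mfact ν : ℝ≥0∞) / (mfact (σ.2 : Multiset (I × J)) : ℝ≥0∞)) * Wprod t u σ.2.1 :=
        (ENNReal.tsum_sigma (fun μ (ρ : marginals μ ν) =>
          ((mfact ν : ℝ≥0∞) / (mfact (ρ : Multiset (I × J)) : ℝ≥0∞)) * Wprod t u ρ.1)).symm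
    _ = Gfun t u ν := by
        rw [Gfun, ← e.tsum_eq (fun σ : Σ μ : Multiset I, marginals μ ν =>
          ((mfact ν : ℝ≥0∞) / (mfact (σ.2 : Multiset (I × J)) : ℝ≥0∞)) * Wprod t u σ.2.1)]
        exact tsum_congr fun ρ => rfl

theorem bang_app_promotion {I J : Type*} [Countable I] [Countable J]
    (P : Set (I → ℝ≥0)) (Q : Set (J → ℝ≥0)) (hP : IsPCS P) (hQ : IsPCS Q)
    (t : I × J → ℝ≥0) (ht : MapsInto t P Q) :
    ∀ u ∈ P, ∀ ν : Multiset J,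
      ∑' μ : Multiset I, bangMat t μ ν * (mpow u μ : ℝ≥0∞)
        = (mpow (fun b => (matApp t u b).toNNReal) ν : ℝ≥0∞) := by
  intro u hu ν
  obtain ⟨hfin, -⟩ := ht u hu
  induction ν using Multiset.induction with
  | empty =>
    rw [lhs_eq_Gfun, Gfun_zero]
    simp [mpow]
  | cons b ν ih =>
    rw [lhs_eq_Gfun, Gfun_cons, ← lhs_eq_Gfun, ih]
    have : (mpow (fun b => (matApp t u b).toNNReal) (b ::ₘ ν) : ℝ≥0)
        = (matApp t u b).toNNReal * mpow (fun b => (matApp t u b).toNNReal) ν := by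
      rw [mpow, Multiset.map_cons, Multiset.prod_cons, mpow]
    rw [this]
    push_cast
    rw [ENNReal.coe_toNNReal (hfin b)]
end

section
/- Let (X_i)_{i∈ℕ} be a countable family of PCSs, X_i = (I_i, P_i). Form the product web I = Σ_{i∈ℕ} I_i and let P(&X) = {u : I → ℝ≥0 | ∀ i, the function a ↦ u_{(i,a)} belongs to P_i}. For v : I_i → ℝ≥0 define ‖v‖_{X_i^⊥} = ⨆_{w ∈ P_i} ⟨w,v⟩ ∈ [0,∞]. Then for u' : I → ℝ≥0, u' ∈ P(&X)^⊥ if and only if: for every i ∈ ℕ the function u'(i) : a ↦ u'_{(i,a)} belongs to P_i^⊥, and ∑'_{i∈ℕ} ‖u'(i)‖_{X_i^⊥} ≤ 1. -/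
open scoped NNReal ENNReal

/-!
Pairing with a vector on `Σ i, X i` is the sum over `i` of the componentwise pairings, and the
supremum over a product of nonempty sets of a sum of independent terms is the sum of the
suprema. Hence the supremum of `⟨u, u'⟩` over `P(&X)` is `∑' i, ‖u'(i)‖`; each component of `u'`
lies in `P i ^⊥` because its norm is bounded by that sum. Nonemptiness holds as `0` lies in every
polar, hence in every PCS.
-/

theorem ENNReal.tsum_iSup_eq_iSup_tsum {ι : Type*} {κ : ι → Type*} [∀ i, Nonempty (κ i)]
    (f : ∀ i, κ i → ℝ≥0∞) :
    ∑' i, ⨆ k, f i k = ⨆ c : ∀ i, κ i, ∑' i, f i (c i) := by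
  classical
  refine le_antisymm ?_ (iSup_le fun c => ENNReal.tsum_le_tsum fun i => le_iSup (f i) (c i))
  rw [ENNReal.tsum_eq_iSup_sum]
  refine iSup_le fun s => ?_
  have hdirected : ∀ c d : ∀ i, κ i, ∃ e : ∀ i, κ i,
      ∀ i, f i (c i) ≤ f i (e i) ∧ f i (d i) ≤ f i (e i) := fun c d =>
    ⟨fun i => if f i (c i) ≤ f i (d i) then d i else c i, fun i => by
      dsimp only
      split_ifs with h
      · exact ⟨h, le_rfl⟩
      · exact ⟨le_rfl, (not_le.1 h).le⟩⟩
  calc ∑ i ∈ s, ⨆ k, f i k = ∑ i ∈ s, ⨆ c : ∀ j, κ j, f i (c i) := by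
        simp only [(Function.surjective_eval _).iSup_comp (f _)]
    _ = ⨆ c : ∀ j, κ j, ∑ i ∈ s, f i (c i) := ENNReal.finsetSum_iSup hdirected
    _ ≤ ⨆ c : ∀ j, κ j, ∑' i, f i (c i) := iSup_mono fun c => ENNReal.sum_le_tsum s

section Polar

variable {I : Type*}

theorem mem_polar_iff_iSup_pairing_le_one {X : Set (I → ℝ≥0)} {u' : I → ℝ≥0} :
    u' ∈ polar X ↔ ⨆ u ∈ X, pairing u u' ≤ 1 :=
  iSup₂_le_iff.symm

theorem zero_mem_polar (X : Set (I → ℝ≥0)) : (0 : I → ℝ≥0) ∈ polar X := fun _ _ => by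
  simp [pairing]

theorem IsPCS.zero_mem {P : Set (I → ℝ≥0)} (hP : IsPCS P) : (0 : I → ℝ≥0) ∈ P :=
  hP.1 ▸ zero_mem_polar _

end Polar

section Sigma

variable {ι : Type*} {X : ι → Type*}

theorem pairing_sigma (u u' : (Σ i, X i) → ℝ≥0) :
    pairing u u' = ∑' i, pairing (fun a => u ⟨i, a⟩) (fun a => u' ⟨i, a⟩) :=
  ENNReal.tsum_sigma' _

theorem iSup_pairing_sigma {P : ∀ i, Set (X i → ℝ≥0)} (hP : ∀ i, (P i).Nonempty)
    (u' : (Σ i, X i) → ℝ≥0) :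
    ⨆ u ∈ {u : (Σ i, X i) → ℝ≥0 | ∀ i, (fun a => u ⟨i, a⟩) ∈ P i}, pairing u u' =
      ∑' i, ⨆ w ∈ P i, pairing w (fun a => u' ⟨i, a⟩) := by
  have : ∀ i, Nonempty (P i) := fun i => (hP i).to_subtype
  simp only [iSup_subtype', ENNReal.tsum_iSup_eq_iSup_tsum]
  refine le_antisymm (iSup_le fun u => ?_) (iSup_le fun c => ?_)
  · exact le_iSup_of_le (fun i => ⟨_, u.2 i⟩) (pairing_sigma _ _).le
  · exact le_iSup_of_le ⟨fun p => (c p.1).1 p.2, fun i => (c i).2⟩ (pairing_sigma _ _).ge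

end Sigma

theorem with_polar_charact_general (X : ℕ → Type*)
    (P : ∀ i, Set (X i → ℝ≥0)) (hP : ∀ i, IsPCS (P i))
    (u' : (Σ i : ℕ, X i) → ℝ≥0) :
    u' ∈ polar {u : (Σ i : ℕ, X i) → ℝ≥0 | ∀ i, (fun a => u ⟨i, a⟩) ∈ P i} ↔
      ((∀ i, (fun a => u' ⟨i, a⟩) ∈ polar (P i)) ∧
        ∑' i : ℕ, ⨆ w ∈ P i, pairing w (fun a => u' ⟨i, a⟩) ≤ 1) := by
  rw [mem_polar_iff_iSup_pairing_le_one,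
    iSup_pairing_sigma fun i => ⟨0, (hP i).zero_mem⟩]
  refine ⟨fun hsum => ⟨fun i => ?_, hsum⟩, And.right⟩
  exact mem_polar_iff_iSup_pairing_le_one.2 ((ENNReal.le_tsum i).trans hsum)

theorem with_polar_charact (X : ℕ → Type*) [∀ i, Countable (X i)]
    (P : ∀ i, Set (X i → ℝ≥0)) (hP : ∀ i, IsPCS (P i))
    (u' : (Σ i : ℕ, X i) → ℝ≥0) :
    u' ∈ polar {u : (Σ i : ℕ, X i) → ℝ≥0 | ∀ i, (fun a => u ⟨i, a⟩) ∈ P i} ↔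
      ((∀ i, (fun a => u' ⟨i, a⟩) ∈ polar (P i)) ∧
        ∑' i : ℕ, ⨆ w ∈ P i, pairing w (fun a => u' ⟨i, a⟩) ≤ 1) :=
  with_polar_charact_general X P hP u'
end

section
/- Let I be a countable type and S : I → I → ℝ≥0 a stochastic matrix. For each i ∈ I, the sum over all stationary states j (i.e., states with S j j = 1) of the suprema ⨆_{n∈ℕ} (S^n) i j is at most 1: ∑'_{j : S j j = 1} ⨆_{n∈ℕ} (S^n) i j ≤ 1. (Hence the limit matrix S^∞, defined by (S^∞)_{i,j} = ⨆_n (S^n)_{i,j} when j is stationary and 0 otherwise, is sub-stochastic.) -/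
open scoped NNReal ENNReal

/-- A stochastic matrix on a countable state space: each row sums to `1`. -/
def IsStochastic {I : Type*} (S : I → I → ℝ≥0) : Prop :=
  ∀ i, ∑' j, (S i j : ℝ≥0∞) = 1

open Classical in
/-- Matrix powers: `S^0` is the identity and
`(S^{n+1}) i j = ∑' k, (S^n) i k * S k j`. -/
noncomputable def matPow {I : Type*} (S : I → I → ℝ≥0) : ℕ → I → I → ℝ≥0
  | 0 => fun i j => if i = j then 1 else 0
  | n + 1 => fun i j => (∑' k, (matPow S n i k : ℝ≥0∞) * (S k j : ℝ≥0∞)).toNNReal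

section aux

variable {I : Type*} (S : I → I → ℝ≥0) (hS : IsStochastic S)

lemma entry_le_one (hS : IsStochastic S) (k j : I) : (S k j : ℝ≥0∞) ≤ 1 := by
  rw [← hS k]; exact ENNReal.le_tsum j

lemma matPow_row (hS : IsStochastic S) : ∀ n i, ∑' j, (matPow S n i j : ℝ≥0∞) = 1 := by
  intro n
  induction n with
  | zero =>
    intro i
    classical
    have h : ∀ j, ((matPow S 0 i j : ℝ≥0) : ℝ≥0∞) = if j = i then 1 else 0 := by
      intro j
      by_cases hji : i = j <;> simp [matPow, hji, eq_comm]
    rw [tsum_congr h]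
    exact tsum_ite_eq i 1
  | succ n ih =>
    intro i
    have hfin : ∀ j, ∑' k, (matPow S n i k : ℝ≥0∞) * (S k j : ℝ≥0∞) ≤ 1 := by
      intro j
      calc ∑' k, (matPow S n i k : ℝ≥0∞) * (S k j : ℝ≥0∞)
          ≤ ∑' k, (matPow S n i k : ℝ≥0∞) * 1 :=
            ENNReal.tsum_le_tsum fun k => mul_le_mul_right (entry_le_one S hS k j) _
        _ = 1 := by simpa using ih i
    have hcoe : ∀ j, ((matPow S (n+1) i j : ℝ≥0) : ℝ≥0∞)
        = ∑' k, (matPow S n i k : ℝ≥0∞) * (S k j : ℝ≥0∞) := by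
      intro j
      show ((∑' k, (matPow S n i k : ℝ≥0∞) * (S k j : ℝ≥0∞)).toNNReal : ℝ≥0∞) = _
      exact ENNReal.coe_toNNReal (lt_of_le_of_lt (hfin j) ENNReal.one_lt_top).ne
    calc ∑' j, (matPow S (n+1) i j : ℝ≥0∞)
        = ∑' j, ∑' k, (matPow S n i k : ℝ≥0∞) * (S k j : ℝ≥0∞) := by
          simp only [hcoe]
      _ = ∑' k, ∑' j, (matPow S n i k : ℝ≥0∞) * (S k j : ℝ≥0∞) := ENNReal.tsum_comm
      _ = ∑' k, (matPow S n i k : ℝ≥0∞) * ∑' j, (S k j : ℝ≥0∞) := by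
          simp only [ENNReal.tsum_mul_left]
      _ = ∑' k, (matPow S n i k : ℝ≥0∞) := by
          refine tsum_congr fun k => ?_
          rw [hS k, mul_one]
      _ = 1 := ih i

lemma matPow_mono (hS : IsStochastic S) (i j : I) (hj : S j j = 1) :
    Monotone fun n => (matPow S n i j : ℝ≥0∞) := by
  apply monotone_nat_of_le_succ
  intro n
  have hfin : ∑' k, (matPow S n i k : ℝ≥0∞) * (S k j : ℝ≥0∞) ≤ 1 := by
    calc ∑' k, (matPow S n i k : ℝ≥0∞) * (S k j : ℝ≥0∞)
        ≤ ∑' k, (matPow S n i k : ℝ≥0∞) * 1 :=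
          ENNReal.tsum_le_tsum fun k => mul_le_mul_right (entry_le_one S hS k j) _
      _ = 1 := by simpa using matPow_row S hS n i
  have hcoe : ((matPow S (n+1) i j : ℝ≥0) : ℝ≥0∞)
      = ∑' k, (matPow S n i k : ℝ≥0∞) * (S k j : ℝ≥0∞) := by
    show ((∑' k, (matPow S n i k : ℝ≥0∞) * (S k j : ℝ≥0∞)).toNNReal : ℝ≥0∞) = _
    exact ENNReal.coe_toNNReal (lt_of_le_of_lt hfin ENNReal.one_lt_top).ne
  rw [hcoe]
  calc (matPow S n i j : ℝ≥0∞) = (matPow S n i j : ℝ≥0∞) * (S j j : ℝ≥0∞) := by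
        rw [hj]; simp
    _ ≤ _ := ENNReal.le_tsum j

end aux

theorem limit_matrix_substochastic {I : Type*} [Countable I] (S : I → I → ℝ≥0)
    (hS : IsStochastic S) (i : I) :
    ∑' j : {j : I // S j j = 1}, ⨆ n : ℕ, (matPow S n i (j : I) : ℝ≥0∞) ≤ 1 := by
  rw [ENNReal.tsum_eq_iSup_sum]
  refine iSup_le fun s => ?_
  rw [ENNReal.finsetSum_iSup_of_monotone (fun j : {j : I // S j j = 1} => matPow_mono S hS i (j : I) j.2)]
  refine iSup_le fun n => ?_
  calc ∑ j ∈ s, (matPow S n i (j : I) : ℝ≥0∞)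
      ≤ ∑' j : {j : I // S j j = 1}, (matPow S n i (j : I) : ℝ≥0∞) := ENNReal.sum_le_tsum s
    _ ≤ ∑' j, (matPow S n i j : ℝ≥0∞) :=
        ENNReal.tsum_comp_le_tsum_of_injective Subtype.val_injective _
    _ = 1 := matPow_row S hS n i
end

section
/- Let I be a countable type, S : I → I → ℝ≥0 a stochastic matrix, i ∈ I, and j ∈ I a stationary state (S j j = 1). Call a path from i to j a finite sequence (i₁, …, i_k) of elements of I with k ≥ 1, i₁ = i, i_k = j, and i_k ≠ i_l for all l ∈ {1, …, k−1}; its weight is ∏_{l=1}^{k−1} S i_l i_{l+1}. Then ⨆_{n∈ℕ} (S^n) i j equals the sum, over all paths w from i to j, of the weight of w. -/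
/-!
Let `f n i` be the total weight of the paths from `i` of `n` steps that visit `j` only at their
last step, i.e. the probability of first reaching `j` at time `n`. Splitting off the first step
gives `f (n + 1) i = ∑ₖ S i k * f n k` for `i ≠ j`, while `f (n + 1) j = 0`. Since `j` is absorbing
(`S j j = 1` forces `S j k = 0` for `k ≠ j`), the same first-step recursion `Sⁿ⁺¹ = S * Sⁿ` yields
`(Sⁿ) i j = ∑_{m ≤ n} f m i`. Hence the increasing limit of `(Sⁿ) i j` is `∑ₙ f n i`, and
regrouping the paths by length gives the sum over all paths.
-/

open scoped NNReal ENNReal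

/-- The weight of a path `(i_1, ..., i_k)`: the product of `S i_l i_(l+1)` over consecutive pairs. -/
noncomputable def pathWeight {I : Type*} (S : I → I → ℝ≥0) (l : List I) : ℝ≥0 :=
  ((l.zip l.tail).map fun p => S p.1 p.2).prod

def IsSubstochastic {I : Type*} (S : I → I → ℝ≥0) : Prop :=
  ∀ i, ∑' j, (S i j : ℝ≥0∞) ≤ 1

theorem IsStochastic.isSubstochastic {I : Type*} {S : I → I → ℝ≥0} (hS : IsStochastic S) :
    IsSubstochastic S :=
  fun i => (hS i).le

theorem tsum_list_eq_tsum_prod_cons {α M : Type*} [AddCommMonoid M]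
    [TopologicalSpace M] {f : List α → M} (hf : f [] = 0) :
    ∑' l, f l = ∑' p : α × List α, f (p.1 :: p.2) := by
  refine (Function.Injective.tsum_eq (g := fun p : α × List α => p.1 :: p.2) ?_ ?_).symm
  · rintro ⟨a, s⟩ ⟨b, t⟩ h
    simp_all
  · rintro (_ | ⟨a, t⟩) h
    · exact absurd hf h
    · exact ⟨(a, t), rfl⟩

section MatPow

variable {I : Type*} {S : I → I → ℝ≥0}

variable (S) in
theorem matPow_zero_self (i : I) : matPow S 0 i i = 1 := by
  simp [matPow]

variable (S) in
theorem matPow_zero_of_ne {i k : I} (h : i ≠ k) : matPow S 0 i k = 0 := by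
  simp [matPow, h]

theorem IsSubstochastic.coe_le_one (hS : IsSubstochastic S) (i k : I) : (S i k : ℝ≥0∞) ≤ 1 :=
  (ENNReal.le_tsum k).trans (hS i)

theorem IsSubstochastic.tsum_matPow_le_one (hS : IsSubstochastic S) (n : ℕ) (i : I) :
    ∑' k, (matPow S n i k : ℝ≥0∞) ≤ 1 := by
  induction n with
  | zero =>
    rw [tsum_eq_single i fun k hk => by simp [matPow_zero_of_ne S hk.symm]]
    simp [matPow_zero_self]
  | succ n ih =>
    calc ∑' k, (matPow S (n + 1) i k : ℝ≥0∞)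
        ≤ ∑' k, ∑' m, (matPow S n i m : ℝ≥0∞) * S m k :=
          ENNReal.tsum_le_tsum fun k => ENNReal.coe_toNNReal_le_self
      _ = ∑' m, (matPow S n i m : ℝ≥0∞) * ∑' k, (S m k : ℝ≥0∞) := by
          rw [ENNReal.tsum_comm]
          simp_rw [ENNReal.tsum_mul_left]
      _ ≤ ∑' m, (matPow S n i m : ℝ≥0∞) :=
          ENNReal.tsum_le_tsum fun m => mul_le_of_le_one_right' (hS m)
      _ ≤ 1 := ih

/-- `matPow` truncates with `toNNReal`, which sends `∞` to `0`, so this recursion in `ℝ≥0∞` needs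
the finiteness bound `tsum_matPow_le_one`. -/
theorem IsSubstochastic.coe_matPow_succ (hS : IsSubstochastic S) (n : ℕ) (i k : I) :
    (matPow S (n + 1) i k : ℝ≥0∞) = ∑' m, (matPow S n i m : ℝ≥0∞) * S m k :=
  ENNReal.coe_toNNReal <| ne_top_of_le_ne_top ENNReal.one_ne_top <|
    (ENNReal.tsum_le_tsum fun m => mul_le_of_le_one_right' (hS.coe_le_one m k)).trans
      (hS.tsum_matPow_le_one n i)

theorem IsSubstochastic.coe_matPow_succ' (hS : IsSubstochastic S) (n : ℕ) (i k : I) :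
    (matPow S (n + 1) i k : ℝ≥0∞) = ∑' m, (S i m : ℝ≥0∞) * matPow S n m k := by
  induction n generalizing k with
  | zero =>
    rw [hS.coe_matPow_succ, tsum_eq_single i fun m hm => by simp [matPow_zero_of_ne S hm.symm],
      tsum_eq_single k fun m hm => by simp [matPow_zero_of_ne S hm]]
    simp [matPow_zero_self]
  | succ n ih =>
    calc (matPow S (n + 2) i k : ℝ≥0∞)
        = ∑' m, (∑' p, (S i p : ℝ≥0∞) * matPow S n p m) * S m k := by
          simp_rw [hS.coe_matPow_succ (n + 1), ih]
      _ = ∑' p, (S i p : ℝ≥0∞) * ∑' m, (matPow S n p m : ℝ≥0∞) * S m k := by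
          simp_rw [← ENNReal.tsum_mul_right, ← ENNReal.tsum_mul_left, mul_assoc]
          exact ENNReal.tsum_comm
      _ = ∑' p, (S i p : ℝ≥0∞) * matPow S (n + 1) p k := by
          simp_rw [hS.coe_matPow_succ]

theorem IsSubstochastic.eq_zero_of_stationary (hS : IsSubstochastic S) {j k : I}
    (hj : S j j = 1) (hk : k ≠ j) : S j k = 0 := by
  classical
  have h : (S j j : ℝ≥0∞) + S j k ≤ 1 + 0 := by
    simpa [Finset.sum_pair hk.symm] using (ENNReal.sum_le_tsum {j, k}).trans (hS j)
  rw [hj, ENNReal.coe_one] at h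
  exact_mod_cast le_zero_iff.1 ((ENNReal.add_le_add_iff_left ENNReal.one_ne_top).1 h)

theorem IsSubstochastic.matPow_stationary (hS : IsSubstochastic S) {j : I} (hj : S j j = 1)
    (n : ℕ) : matPow S n j j = 1 := by
  induction n with
  | zero => exact matPow_zero_self S j
  | succ n ih =>
    have h := hS.coe_matPow_succ' n j j
    rw [tsum_eq_single j fun m hm => by simp [hS.eq_zero_of_stationary hj hm], ih, hj] at h
    simpa using h

end MatPow

section FirstPassage

variable {I : Type*} (S : I → I → ℝ≥0) (j : I)

theorem pathWeight_cons_cons (a b : I) (t : List I) :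
    pathWeight S (a :: b :: t) = S a b * pathWeight S (b :: t) := by
  simp [pathWeight]

open Classical in
/-- The weight of `l` if `l` is a path of `n` steps that visits `j` only at its end, else `0`. -/
noncomputable def firstPassageWeight (n : ℕ) (l : List I) : ℝ≥0∞ :=
  if l.getLast? = some j ∧ j ∉ l.dropLast ∧ l.length = n + 1 then pathWeight S l else 0

noncomputable def firstPassageProb (n : ℕ) (i : I) : ℝ≥0∞ :=
  ∑' t, firstPassageWeight S j n (i :: t)

theorem firstPassageProb_zero_self : firstPassageProb S j 0 j = 1 := by
  rw [firstPassageProb, tsum_eq_single [] fun t ht => by simp [firstPassageWeight, ht]]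
  simp [firstPassageWeight, pathWeight]

theorem firstPassageProb_zero_of_ne {i : I} (hi : i ≠ j) : firstPassageProb S j 0 i = 0 :=
  ENNReal.tsum_eq_zero.2 fun t => by
    cases t <;> simp [firstPassageWeight, hi]

theorem firstPassageProb_succ_self (n : ℕ) : firstPassageProb S j (n + 1) j = 0 :=
  ENNReal.tsum_eq_zero.2 fun t => by
    cases t <;> simp [firstPassageWeight]

variable {S j} in
theorem firstPassageWeight_succ_cons_cons {i : I} (hi : i ≠ j) (n : ℕ) (k : I) (t : List I) :
    firstPassageWeight S j (n + 1) (i :: k :: t) = S i k * firstPassageWeight S j n (k :: t) := by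
  simp only [firstPassageWeight, pathWeight_cons_cons, ENNReal.coe_mul, mul_ite, mul_zero]
  congr 1
  simp [hi.symm]

variable {S j} in
theorem firstPassageProb_succ_of_ne {i : I} (hi : i ≠ j) (n : ℕ) :
    firstPassageProb S j (n + 1) i = ∑' k, S i k * firstPassageProb S j n k := by
  rw [firstPassageProb, tsum_list_eq_tsum_prod_cons (by simp [firstPassageWeight]),
    ENNReal.tsum_prod']
  simp_rw [firstPassageWeight_succ_cons_cons hi, ENNReal.tsum_mul_left, firstPassageProb]

theorem tsum_firstPassageWeight (l : List I) :
    ∑' n, firstPassageWeight S j n l =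
      {l | l.getLast? = some j ∧ j ∉ l.dropLast}.indicator
        (fun l => (pathWeight S l : ℝ≥0∞)) l := by
  rcases l.eq_nil_or_concat with rfl | ⟨t, a, rfl⟩
  · simp [firstPassageWeight]
  · rw [tsum_eq_single t.length fun n hn => by simp [firstPassageWeight, Ne.symm hn]]
    classical
    simp only [firstPassageWeight, Set.indicator_apply]
    congr 1
    simp

end FirstPassage

theorem IsSubstochastic.coe_matPow_eq_sum_firstPassageProb {I : Type*} {S : I → I → ℝ≥0}
    (hS : IsSubstochastic S) {j : I} (hj : S j j = 1) (n : ℕ) (i : I) :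
    (matPow S n i j : ℝ≥0∞) = ∑ m ∈ Finset.range (n + 1), firstPassageProb S j m i := by
  induction n generalizing i with
  | zero =>
    rcases eq_or_ne i j with rfl | hi
    · simp [matPow_zero_self, firstPassageProb_zero_self]
    · simp [matPow_zero_of_ne S hi, firstPassageProb_zero_of_ne S j hi]
  | succ n ih =>
    rw [Finset.sum_range_succ']
    rcases eq_or_ne i j with rfl | hi
    · simp [hS.matPow_stationary hj, firstPassageProb_succ_self, firstPassageProb_zero_self]
    · calc (matPow S (n + 1) i j : ℝ≥0∞)
          = ∑' k, (S i k : ℝ≥0∞) * ∑ m ∈ Finset.range (n + 1), firstPassageProb S j m k := by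
            simp_rw [hS.coe_matPow_succ', ih]
        _ = ∑ m ∈ Finset.range (n + 1), firstPassageProb S j (m + 1) i := by
            simp_rw [firstPassageProb_succ_of_ne hi, Finset.mul_sum]
            exact Summable.tsum_finsetSum fun _ _ => ENNReal.summable
        _ = _ := by rw [firstPassageProb_zero_of_ne S j hi, add_zero]

theorem limit_matrix_eq_sum_paths_general {I : Type*} (S : I → I → ℝ≥0)
    (hS : IsStochastic S) (i j : I) (hj : S j j = 1) :
    (⨆ n : ℕ, (matPow S n i j : ℝ≥0∞)) =
      ∑' l : {l : List I // l.head? = some i ∧ l.getLast? = some j ∧ j ∉ l.dropLast},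
        (pathWeight S (l : List I) : ℝ≥0∞) := by
  calc (⨆ n : ℕ, (matPow S n i j : ℝ≥0∞))
      = ∑' n, firstPassageProb S j n i := by
        simp_rw [ENNReal.tsum_eq_iSup_nat' (Filter.tendsto_add_atTop_nat 1),
          hS.isSubstochastic.coe_matPow_eq_sum_firstPassageProb hj]
    _ = ∑' t, {l | l.getLast? = some j ∧ j ∉ l.dropLast}.indicator
          (fun l => (pathWeight S l : ℝ≥0∞)) (i :: t) := by
        simp_rw [firstPassageProb, ENNReal.tsum_comm (α := ℕ), tsum_firstPassageWeight]
    _ = ∑' l, {l : List I | l.head? = some i ∧ l.getLast? = some j ∧ j ∉ l.dropLast}.indicator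
          (fun l => (pathWeight S l : ℝ≥0∞)) l := by
        symm
        rw [tsum_list_eq_tsum_prod_cons (by simp), ENNReal.tsum_prod',
          tsum_eq_single i fun k hk => by simp [Set.indicator, hk]]
        exact tsum_congr fun t => Set.indicator_eq_indicator (by simp) rfl
    _ = _ := (tsum_subtype _ _).symm

theorem limit_matrix_eq_sum_paths {I : Type*} [Countable I] (S : I → I → ℝ≥0)
    (hS : IsStochastic S) (i j : I) (hj : S j j = 1) :
    (⨆ n : ℕ, (matPow S n i j : ℝ≥0∞)) =
      ∑' l : {l : List I // l.head? = some i ∧ l.getLast? = some j ∧ j ∉ l.dropLast},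
        (pathWeight S (l : List I) : ℝ≥0∞) :=
  limit_matrix_eq_sum_paths_general S hS i j hj
end
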